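/- arXiv:1607.05428 — 2 statements merged into one kernel-verified Lean document; each statement's English description precedes it below -/
import Mathlib

section
/- Let F be a polyhedral multifunction from X to Y, i.e., the graph of F, gph F = {(x,y) ∈ X × Y : y ∈ F(x)}, is the union of finitely many polyhedral convex sets. Then there exists a common modulus κ ≥ 0 such that F satisfies the error bound condition for every point y ∈ Y with F⁻¹(y) ≠ ∅; that is, for each such y there exists ε > 0 such that whenever x ∈ X satisfies dist(y, F(x)) ≤ ε, one has dist(x, F⁻¹(y)) ≤ κ · dist(y, F(x)). -/
/- STATEMENT 0: A polyhedral multifunction (graph is a finite union of polyhedral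
convex sets) satisfies the error bound condition for every point `y` with
`F⁻¹(y) ≠ ∅`, with a common modulus `κ ≥ 0`. -/

open Set

/-- A set is polyhedral if it is the intersection of finitely many closed half-spaces. -/
def IsPolyhedral {E : Type*} [NormedAddCommGroup E] [NormedSpace ℝ E] (C : Set E) : Prop :=
  ∃ s : Finset ((E →ₗ[ℝ] ℝ) × ℝ), C = {x | ∀ q ∈ s, q.1 x ≤ q.2}

/-!
Each piece `C` of the graph is a polyhedron `{(x, y) | A x + B y ≤ c}`, whose fiber over `y` is the
polyhedron `{x | A x ≤ c - B y}`. These fibers are Lipschitz in `y` wherever they are nonempty, by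
Hoffman's error bound: if `x` violates `⟪a i, x⟫ ≤ b i` by at most `r` and `x₀` is the nearest
point of the polyhedron, the KKT conditions and Carathéodory's theorem for cones write
`x - x₀ = ∑ μ i • a i` over linearly independent active `a i`, with `μ ≥ 0` and
`∑ μ i ≤ c * ‖x - x₀‖`, so `‖x - x₀‖² = ∑ μ i * ⟪a i, x - x₀⟫ ≤ c * r * ‖x - x₀‖`.
The projections of the pieces to `Y` are polyhedra by Fourier–Motzkin elimination, hence closed,
so a small ball around `y` only meets the projections of pieces whose fiber over `y` is nonempty;
a point of `F x` nearest to `y` lies in such a piece.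
-/

open Filter Topology
open scoped RealInnerProductSpace

theorem exists_forall_le_and_forall_le_iff {α ι κ : Type*} [LinearOrder α] [Nonempty α]
    {s : Finset ι} {t : Finset κ} {f : ι → α} {g : κ → α} :
    (∃ c, (∀ i ∈ s, f i ≤ c) ∧ ∀ j ∈ t, c ≤ g j) ↔ ∀ i ∈ s, ∀ j ∈ t, f i ≤ g j := by
  refine ⟨fun ⟨c, hf, hg⟩ i hi j hj => (hf i hi).trans (hg j hj), fun h => ?_⟩
  rcases s.eq_empty_or_nonempty with rfl | hs
  · obtain ⟨c, hc⟩ := (t.image g).bddBelow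
    exact ⟨c, by simp, fun j hj => hc (Finset.mem_coe.2 (Finset.mem_image_of_mem g hj))⟩
  · exact ⟨s.sup' hs f, fun i hi => Finset.le_sup' f hi,
      fun j hj => Finset.sup'_le hs f fun i hi => h i hi j hj⟩

section Polyhedral

variable {E F : Type*} [NormedAddCommGroup E] [NormedSpace ℝ E]
  [NormedAddCommGroup F] [NormedSpace ℝ F]

theorem IsPolyhedral.preimage {P : Set E} (hP : IsPolyhedral P) (f : F →ₗ[ℝ] E) :
    IsPolyhedral (f ⁻¹' P) := by
  classical
  obtain ⟨s, rfl⟩ := hP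
  refine ⟨s.image fun q => (q.1 ∘ₗ f, q.2), ?_⟩
  ext x
  simp only [mem_preimage, mem_ofPred_eq, Finset.forall_mem_image, LinearMap.comp_apply]

theorem IsPolyhedral.isClosed [FiniteDimensional ℝ E] {P : Set E} (hP : IsPolyhedral P) :
    IsClosed P := by
  obtain ⟨s, rfl⟩ := hP
  simp only [ofPred_forall]
  exact isClosed_biInter fun q _ =>
    isClosed_le q.1.continuous_of_finiteDimensional continuous_const

theorem forall_apply_add_smul_le_iff (s : Finset ((E →ₗ[ℝ] ℝ) × ℝ)) (z v : E) (t : ℝ) :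
    (∀ q ∈ s, q.1 (z + t • v) ≤ q.2) ↔ (∀ q ∈ s.filter (·.1 v = 0), q.1 z ≤ q.2) ∧
      (∀ q ∈ s.filter (·.1 v < 0), (q.2 - q.1 z) / q.1 v ≤ t) ∧
      ∀ q ∈ s.filter (0 < ·.1 v), t ≤ (q.2 - q.1 z) / q.1 v := by
  simp only [map_add, map_smul, smul_eq_mul, Finset.mem_filter, and_imp]
  constructor
  · intro h
    refine ⟨fun q hq h0 => ?_, fun q hq hn => ?_, fun q hq hp => ?_⟩ <;> have := h q hq
    · simpa [h0] using this
    · rw [div_le_iff_of_neg hn]; linarith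
    · rw [le_div_iff₀ hp]; linarith
  · rintro ⟨h₀, hₙ, hₚ⟩ q hq
    rcases lt_trichotomy (q.1 v) 0 with hn | h0 | hp
    · have := hₙ q hq hn; rw [div_le_iff_of_neg hn] at this; linarith
    · have := h₀ q hq h0; rw [h0]; linarith
    · have := hₚ q hq hp; rw [le_div_iff₀ hp] at this; linarith

/-- Fourier–Motzkin elimination of the direction `v`. -/
theorem IsPolyhedral.exists_add_smul_mem {P : Set E} (hP : IsPolyhedral P) (v : E) :
    IsPolyhedral {z | ∃ t : ℝ, z + t • v ∈ P} := by
  classical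
  obtain ⟨s, rfl⟩ := hP
  -- each row increasing along `v` is paired with each row decreasing along `v`,
  -- with weights that cancel `v`
  refine ⟨s.filter (·.1 v = 0) ∪ (s.filter (·.1 v < 0) ×ˢ s.filter (0 < ·.1 v)).image fun np =>
    (np.2.1 v • np.1.1 - np.1.1 v • np.2.1, np.2.1 v * np.1.2 - np.1.1 v * np.2.2), ?_⟩
  ext z
  have hpair : ∀ n ∈ s.filter (·.1 v < 0), ∀ p ∈ s.filter (0 < ·.1 v),
      (n.2 - n.1 z) / n.1 v ≤ (p.2 - p.1 z) / p.1 v ↔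
        (p.1 v • n.1 - n.1 v • p.1) z ≤ p.1 v * n.2 - n.1 v * p.2 := by
    intro n hn p hp
    have hn' : 0 < -n.1 v := neg_pos.2 (Finset.mem_filter.1 hn).2
    have hp' : 0 < p.1 v := (Finset.mem_filter.1 hp).2
    simp only [LinearMap.sub_apply, LinearMap.smul_apply, smul_eq_mul]
    rw [← neg_div_neg_eq, neg_sub, div_le_div_iff₀ hn' hp']
    constructor <;> intro h <;> linarith
  simp_rw [mem_ofPred_eq, forall_apply_add_smul_le_iff]
  rw [exists_and_left, exists_forall_le_and_forall_le_iff, Finset.forall_mem_union,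
    Finset.forall_mem_image]
  refine and_congr_right fun _ => ⟨fun h np hnp => ?_, fun h n hn p hp => ?_⟩
  · obtain ⟨hn, hp⟩ := Finset.mem_product.1 hnp
    exact (hpair _ hn _ hp).1 (h _ hn _ hp)
  · exact (hpair n hn p hp).2 (h (x := (n, p)) (Finset.mem_product.2 ⟨hn, hp⟩))

theorem IsPolyhedral.exists_add_mem_span {P : Set E} (hP : IsPolyhedral P) (u : Finset E) :
    IsPolyhedral {z | ∃ w ∈ Submodule.span ℝ (u : Set E), z + w ∈ P} := by
  classical
  induction u using Finset.induction_on with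
  | empty => simpa using hP
  | insert v u _ ih =>
    convert ih.exists_add_smul_mem v using 1
    ext z
    simp only [mem_ofPred_eq, Finset.coe_insert, Submodule.mem_span_insert, add_assoc]
    constructor
    · rintro ⟨_, ⟨t, w, hw, rfl⟩, hz⟩
      exact ⟨t, w, hw, hz⟩
    · rintro ⟨t, w, hw, hz⟩
      exact ⟨_, ⟨t, w, hw, rfl⟩, hz⟩

theorem IsPolyhedral.image_snd [FiniteDimensional ℝ E] {C : Set (E × F)} (hC : IsPolyhedral C) :
    IsPolyhedral (Prod.snd '' C) := by
  obtain ⟨u, hu⟩ := Module.Finite.fg_top.map (LinearMap.inl ℝ E F)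
  convert (hC.exists_add_mem_span u).preimage (LinearMap.inr ℝ E F) using 1
  ext y
  simp only [hu, Submodule.map_top, LinearMap.mem_range, mem_image, mem_preimage, mem_ofPred_eq]
  constructor
  · rintro ⟨⟨x, y⟩, hxy, rfl⟩
    exact ⟨_, ⟨x, rfl⟩, by simpa using hxy⟩
  · rintro ⟨_, ⟨x, rfl⟩, hxy⟩
    exact ⟨_, hxy, by simp⟩

end Polyhedral

namespace PointedCone

section Module

variable {E : Type*} [AddCommGroup E] [Module ℝ E]

theorem mem_hull_finset_iff {u : Finset E} {x : E} :
    x ∈ hull ℝ (u : Set E) ↔ ∃ μ : E → ℝ, (∀ v ∈ u, 0 ≤ μ v) ∧ ∑ v ∈ u, μ v • v = x := by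
  constructor
  · intro hx
    obtain ⟨μ, -, rfl⟩ := Submodule.mem_span_finset.1 hx
    exact ⟨fun v => μ v, fun v _ => (μ v).2, rfl⟩
  · rintro ⟨μ, hμ, rfl⟩
    exact Submodule.sum_mem _ fun v hv => smul_mem _ (hμ v hv) (subset_hull hv)

theorem exists_mem_hull_erase_of_not_linearIndepOn [DecidableEq E] {u : Finset E}
    (hu : ¬LinearIndepOn ℝ id (u : Set E)) {x : E} (hx : x ∈ hull ℝ (u : Set E)) :
    ∃ v ∈ u, x ∈ hull ℝ (u.erase v : Set E) := by
  obtain ⟨μ, hμ, rfl⟩ := mem_hull_finset_iff.1 hx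
  obtain ⟨c, hc, hpos⟩ : ∃ c : E → ℝ, ∑ v ∈ u, c v • v = 0 ∧ ∃ v ∈ u, 0 < c v := by
    obtain ⟨c, hc, v, hv, hcv⟩ := not_linearIndepOn_finset_iff.1 hu
    rcases hcv.lt_or_gt with hneg | hpos
    · refine ⟨-c, ?_, v, hv, neg_pos.2 hneg⟩
      simpa [neg_smul, Finset.sum_neg_distrib] using hc
    · exact ⟨c, by simpa using hc, v, hv, hpos⟩
  -- move along the dependence `c` until the first coefficient of `μ` vanishes
  obtain ⟨v₁, hv₁, hmin⟩ := (u.filter (0 < c ·)).exists_min_image (fun v => μ v / c v)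
    (by simpa [Finset.filter_nonempty_iff] using hpos)
  rw [Finset.mem_filter] at hv₁
  set τ := μ v₁ / c v₁
  have hτ : 0 ≤ τ := div_nonneg (hμ v₁ hv₁.1) hv₁.2.le
  refine ⟨v₁, hv₁.1, mem_hull_finset_iff.2 ⟨fun v => μ v - τ * c v, fun v hv => ?_, ?_⟩⟩
  · have hv := Finset.mem_of_mem_erase hv
    rcases le_or_gt (c v) 0 with hcv | hcv
    · nlinarith [hμ v hv]
    · have := hmin v (Finset.mem_filter.2 ⟨hv, hcv⟩)
      rw [le_div_iff₀ hcv] at this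
      linarith
  · have hτv₁ : μ v₁ - τ * c v₁ = 0 := by simp [τ, div_mul_cancel₀ _ hv₁.2.ne']
    rw [Finset.sum_erase _ (by simp only [hτv₁, zero_smul])]
    simp only [sub_smul, mul_smul, Finset.sum_sub_distrib, ← Finset.smul_sum, hc, smul_zero,
      sub_zero]

theorem image_linearCombination_eq_hull (w : Finset E) :
    (Fintype.linearCombination ℝ fun i : ↥(w : Set E) => (i : E)) '' Ici 0 =
      hull ℝ (w : Set E) := by
  ext x
  simp only [mem_image, mem_Ici, Fintype.linearCombination_apply, SetLike.mem_coe]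
  constructor
  · rintro ⟨ν, hν, rfl⟩
    exact Submodule.sum_mem _ fun i _ => smul_mem _ (hν i) (subset_hull i.2)
  · intro hx
    obtain ⟨μ, hμ, rfl⟩ := mem_hull_finset_iff.1 hx
    exact ⟨fun i => μ i, fun i => hμ i i.2, Finset.sum_finset_coe (fun v => μ v • v) w⟩

/-- Carathéodory's theorem for cones. -/
theorem exists_linearIndepOn_subset_mem_hull (u : Finset E) {x : E}
    (hx : x ∈ hull ℝ (u : Set E)) :
    ∃ w ⊆ u, LinearIndepOn ℝ id (w : Set E) ∧ x ∈ hull ℝ (w : Set E) := by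
  classical
  induction u using Finset.strongInduction with
  | H u ih =>
    by_cases hu : LinearIndepOn ℝ id (u : Set E)
    · exact ⟨u, subset_rfl, hu, hx⟩
    obtain ⟨v, hv, hxv⟩ := exists_mem_hull_erase_of_not_linearIndepOn hu hx
    obtain ⟨w, hwu, hw, hxw⟩ := ih _ (Finset.erase_ssubset hv) hxv
    exact ⟨w, hwu.trans (Finset.erase_subset _ _), hw, hxw⟩

end Module

section Normed

variable {E : Type*} [NormedAddCommGroup E] [NormedSpace ℝ E]

theorem isClosed_hull_of_linearIndepOn {w : Finset E} (hw : LinearIndepOn ℝ id (w : Set E)) :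
    IsClosed (hull ℝ (w : Set E) : Set E) := by
  rw [← image_linearCombination_eq_hull]
  exact (LinearMap.isClosedEmbedding_of_injective (LinearMap.ker_eq_bot.2
    hw.fintypeLinearCombination_injective)).isClosedMap _ isClosed_Ici

theorem exists_sum_le_mul_norm_of_linearIndepOn {w : Finset E}
    (hw : LinearIndepOn ℝ id (w : Set E)) :
    ∃ c, ∀ μ : E → ℝ, ∑ v ∈ w, μ v ≤ c * ‖∑ v ∈ w, μ v • v‖ := by
  set L := Fintype.linearCombination ℝ fun i : ↥(w : Set E) => (i : E)
  obtain ⟨K, -, hK⟩ := L.injective_iff_antilipschitz.1 hw.fintypeLinearCombination_injective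
  refine ⟨w.card * K, fun μ => ?_⟩
  set ν : ↥(w : Set E) → ℝ := fun i => μ i
  have hν : ‖ν‖ ≤ K * ‖∑ v ∈ w, μ v • v‖ := by
    simpa [L, ν, Fintype.linearCombination_apply, Finset.sum_attach w (fun v => μ v • v)]
      using hK.le_mul_norm (map_zero L) ν
  calc ∑ v ∈ w, μ v = ∑ i, ν i := (Finset.sum_finset_coe μ w).symm
    _ ≤ ∑ _i : ↥(w : Set E), ‖ν‖ :=
        Finset.sum_le_sum fun i _ => (Real.le_norm_self _).trans (norm_le_pi_norm ν i)
    _ = w.card * ‖ν‖ := by simp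
    _ ≤ w.card * (K * ‖∑ v ∈ w, μ v • v‖) := by gcongr
    _ = w.card * K * ‖∑ v ∈ w, μ v • v‖ := by ring

theorem isClosed_hull_finset (u : Finset E) : IsClosed (hull ℝ (u : Set E) : Set E) := by
  classical
  have : (hull ℝ (u : Set E) : Set E) =
      ⋃ w ∈ u.powerset.filter fun w : Finset E => LinearIndepOn ℝ id (w : Set E),
        hull ℝ (w : Set E) := by
    ext x
    simp only [mem_iUnion, Finset.mem_filter, Finset.mem_powerset, SetLike.mem_coe, exists_prop]
    refine ⟨fun hx => ?_, fun ⟨w, ⟨hwu, _⟩, hxw⟩ => Submodule.span_mono (by simpa) hxw⟩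
    obtain ⟨w, hwu, hw, hxw⟩ := exists_linearIndepOn_subset_mem_hull u hx
    exact ⟨w, ⟨hwu, hw⟩, hxw⟩
  rw [this]
  exact isClosed_biUnion_finset fun w hw =>
    isClosed_hull_of_linearIndepOn (Finset.mem_filter.1 hw).2

theorem exists_forall_mem_hull_sum_le (t : Finset E) :
    ∃ c, 0 ≤ c ∧ ∀ u ⊆ t, ∀ x ∈ hull ℝ (u : Set E), ∃ w ⊆ u, ∃ μ : E → ℝ,
      (∀ v ∈ w, 0 ≤ μ v) ∧ ∑ v ∈ w, μ v • v = x ∧ ∑ v ∈ w, μ v ≤ c * ‖x‖ := by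
  have hbound : ∀ w ∈ t.powerset, ∀ᶠ c in atTop, LinearIndepOn ℝ id (w : Set E) →
      ∀ μ : E → ℝ, ∑ v ∈ w, μ v ≤ c * ‖∑ v ∈ w, μ v • v‖ := by
    intro w _
    by_cases hw : LinearIndepOn ℝ id (w : Set E)
    · obtain ⟨c₀, hc₀⟩ := exists_sum_le_mul_norm_of_linearIndepOn hw
      filter_upwards [eventually_ge_atTop c₀] with c hc _ μ
      exact (hc₀ μ).trans (by gcongr)
    · exact Eventually.of_forall fun _ h => absurd h hw
  obtain ⟨c, hc, hc0⟩ :=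
    ((eventually_all_finset _).2 hbound |>.and (eventually_ge_atTop 0)).exists
  refine ⟨c, hc0, fun u hut x hx => ?_⟩
  obtain ⟨w, hwu, hw, hxw⟩ := exists_linearIndepOn_subset_mem_hull u hx
  obtain ⟨μ, hμ, rfl⟩ := mem_hull_finset_iff.1 hxw
  exact ⟨w, hwu, μ, hμ, rfl, hc w (Finset.mem_powerset.2 (hwu.trans hut)) hw μ⟩

end Normed

end PointedCone

section Hoffman

variable {ι E : Type*} [NormedAddCommGroup E] [InnerProductSpace ℝ E]
  {s : Finset ι} {a : ι → E} {b : ι → ℝ}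

theorem eventually_forall_inner_add_smul_le {x₀ d : E} (hx₀ : ∀ i ∈ s, ⟪a i, x₀⟫ ≤ b i)
    (hd : ∀ i ∈ s, ⟪a i, x₀⟫ = b i → ⟪a i, d⟫ ≤ 0) :
    ∀ᶠ t in 𝓝[>] (0 : ℝ), ∀ i ∈ s, ⟪a i, x₀ + t • d⟫ ≤ b i := by
  refine (eventually_all_finset s).2 fun i hi => ?_
  rcases (hx₀ i hi).eq_or_lt with hact | hlt
  · filter_upwards [self_mem_nhdsWithin] with t ht
    rw [inner_add_right, real_inner_smul_right, hact]
    nlinarith [hd i hi hact, mem_Ioi.1 ht]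
  · have hcont : Continuous fun t : ℝ => ⟪a i, x₀ + t • d⟫ := by fun_prop
    have := hcont.tendsto' 0 _ (by simp) |>.eventually (gt_mem_nhds hlt)
    exact (this.filter_mono nhdsWithin_le_nhds).mono fun t ht => ht.le

theorem norm_le_mul_of_sum_inner_le {w : Finset E} {μ : E → ℝ} {v : E} {c r : ℝ} (hc : 0 ≤ c)
    (hr : 0 ≤ r) (hμ : ∀ z ∈ w, 0 ≤ μ z) (hv : ∑ z ∈ w, μ z • z = v)
    (hsum : ∑ z ∈ w, μ z ≤ c * ‖v‖) (hinner : ∀ z ∈ w, ⟪z, v⟫ ≤ r) : ‖v‖ ≤ c * r := by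
  have hsq : ‖v‖ * ‖v‖ ≤ c * r * ‖v‖ := calc
    ‖v‖ * ‖v‖ = ∑ z ∈ w, μ z * ⟪z, v⟫ := by
      rw [← real_inner_self_eq_norm_mul_norm]
      nth_rw 1 [← hv]
      simp only [sum_inner, real_inner_smul_left]
    _ ≤ ∑ z ∈ w, μ z * r :=
      Finset.sum_le_sum fun z hz => mul_le_mul_of_nonneg_left (hinner z hz) (hμ z hz)
    _ = (∑ z ∈ w, μ z) * r := (Finset.sum_mul ..).symm
    _ ≤ c * ‖v‖ * r := by gcongr
    _ = c * r * ‖v‖ := by ring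
  rcases (norm_nonneg v).eq_or_lt with h | h
  · rw [← h]; positivity
  · exact le_of_mul_le_mul_right hsq h

variable [FiniteDimensional ℝ E]

/-- The KKT conditions at a point of a polyhedron. -/
theorem mem_hull_active_of_forall_inner_sub_le_zero [DecidableEq E] {x₀ v : E}
    (hx₀ : ∀ i ∈ s, ⟪a i, x₀⟫ ≤ b i) (hv : ∀ z, (∀ i ∈ s, ⟪a i, z⟫ ≤ b i) → ⟪v, z - x₀⟫ ≤ 0) :
    v ∈ PointedCone.hull ℝ (((s.filter fun i => ⟪a i, x₀⟫ = b i).image a : Finset E) : Set E) := by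
  by_contra hnot
  let K : ProperCone ℝ E :=
    ⟨_, PointedCone.isClosed_hull_finset ((s.filter fun i => ⟪a i, x₀⟫ = b i).image a)⟩
  obtain ⟨y, hyK, hyv⟩ := K.hyperplane_separation' hnot
  have hd : ∀ i ∈ s, ⟪a i, x₀⟫ = b i → ⟪a i, -y⟫ ≤ 0 := fun i hi hact => by
    have := hyK (a i) (PointedCone.subset_hull (by simpa using ⟨i, ⟨hi, hact⟩, rfl⟩))
    rw [inner_neg_right]; linarith
  obtain ⟨t, hmem, ht⟩ :=
    ((eventually_forall_inner_add_smul_le hx₀ hd).and self_mem_nhdsWithin).exists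
  have := hv _ hmem
  rw [add_sub_cancel_left, real_inner_smul_right, inner_neg_right] at this
  nlinarith

/-- Hoffman's error bound. -/
theorem exists_dist_le_mul_of_forall_inner_le_add (s : Finset ι) (a : ι → E) :
    ∃ κ, ∀ (b : ι → ℝ) (x : E) (r : ℝ), 0 ≤ r → (∀ i ∈ s, ⟪a i, x⟫ ≤ b i + r) →
      (∃ z, ∀ i ∈ s, ⟪a i, z⟫ ≤ b i) → ∃ z, (∀ i ∈ s, ⟪a i, z⟫ ≤ b i) ∧ dist x z ≤ κ * r := by
  classical
  obtain ⟨c, hc0, hc⟩ := PointedCone.exists_forall_mem_hull_sum_le (s.image a)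
  refine ⟨c, fun b x r hr hx hne => ?_⟩
  set S := {z | ∀ i ∈ s, ⟪a i, z⟫ ≤ b i}
  have hS_closed : IsClosed S := by
    simp only [S, ofPred_forall]
    exact isClosed_biInter fun i _ => isClosed_le (by fun_prop) continuous_const
  have hS_convex : Convex ℝ S := by
    simp only [S, ofPred_forall]
    exact convex_iInter₂ fun i _ => convex_halfSpace_le (innerₛₗ ℝ (a i)).isLinear _
  obtain ⟨x₀, hx₀, hproj⟩ :=
    exists_norm_eq_iInf_of_complete_convex hne hS_closed.isComplete hS_convex x
  have hnormal := (norm_eq_iInf_iff_real_inner_le_zero hS_convex hx₀).1 hproj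
  obtain ⟨w, hw, μ, hμ, hsum, hle⟩ := hc _ (Finset.image_subset_image (Finset.filter_subset _ _))
    _ (mem_hull_active_of_forall_inner_sub_le_zero hx₀ hnormal)
  refine ⟨x₀, hx₀, ?_⟩
  rw [dist_eq_norm]
  refine norm_le_mul_of_sum_inner_le hc0 hr hμ hsum hle fun z hz => ?_
  obtain ⟨i, hi, rfl⟩ := Finset.mem_image.1 (hw hz)
  rw [Finset.mem_filter] at hi
  rw [inner_sub_right, hi.2]
  linarith [hx i hi.1]

end Hoffman

theorem IsPolyhedral.exists_dist_fiber_le {X Y : Type*} [NormedAddCommGroup X]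
    [InnerProductSpace ℝ X] [FiniteDimensional ℝ X] [NormedAddCommGroup Y] [NormedSpace ℝ Y]
    [FiniteDimensional ℝ Y] {C : Set (X × Y)} (hC : IsPolyhedral C) :
    ∃ κ, ∀ x y y', (x, y') ∈ C → y ∈ Prod.snd '' C →
      ∃ x₁, (x₁, y) ∈ C ∧ dist x x₁ ≤ κ * dist y y' := by
  obtain ⟨s, rfl⟩ := hC
  set a : (X × Y →ₗ[ℝ] ℝ) × ℝ → X := fun q =>
    (InnerProductSpace.toDual ℝ X).symm (q.1 ∘ₗ LinearMap.inl ℝ X Y).toContinuousLinearMap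
  have hsplit : ∀ (q : (X × Y →ₗ[ℝ] ℝ) × ℝ) (x : X) (y : Y),
      q.1 (x, y) = ⟪a q, x⟫ + q.1 (0, y) := by
    intro q x y
    simp [a, InnerProductSpace.toDual_symm_apply, ← map_add]
  obtain ⟨κ, hκ⟩ := exists_dist_le_mul_of_forall_inner_le_add s a
  have hbound : ∀ q ∈ s, ∀ᶠ L in atTop, ∀ u : Y, q.1 (0, u) ≤ L * ‖u‖ := fun q _ => by
    set f := (q.1 ∘ₗ LinearMap.inr ℝ X Y).toContinuousLinearMap
    filter_upwards [eventually_ge_atTop ‖f‖] with L hL u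
    calc q.1 (0, u) = f u := rfl
      _ ≤ ‖f‖ * ‖u‖ := (Real.le_norm_self _).trans (f.le_opNorm u)
      _ ≤ L * ‖u‖ := by gcongr
  obtain ⟨L, hL, hL0⟩ := ((eventually_all_finset s).2 hbound |>.and (eventually_ge_atTop 0)).exists
  have hfiber : ∀ x y, (x, y) ∈ {p | ∀ q ∈ s, q.1 p ≤ q.2} ↔
      ∀ q ∈ s, ⟪a q, x⟫ ≤ q.2 - q.1 (0, y) := by
    intro x y
    simp only [mem_ofPred_eq, hsplit _ x y, le_sub_iff_add_le]
  refine ⟨κ * L, ?_⟩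
  rintro x - y' hxy' ⟨⟨x₀, y⟩, hx₀, rfl⟩
  have hviol : ∀ q ∈ s, ⟪a q, x⟫ ≤ q.2 - q.1 (0, y) + L * dist y y' := by
    intro q hq
    have h₁ := hxy' q hq
    have h₂ := hL q hq (y - y')
    rw [hsplit] at h₁
    rw [← sub_zero (0 : X), ← Prod.mk_sub_mk, map_sub, ← dist_eq_norm] at h₂
    linarith
  obtain ⟨x₁, hx₁, hdist⟩ :=
    hκ _ x _ (by positivity) hviol ⟨x₀, (hfiber _ _).1 hx₀⟩
  exact ⟨x₁, (hfiber _ _).2 hx₁, hdist.trans_eq (mul_assoc ..).symm⟩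

theorem IsClosed.exists_infEDist_eq_edist {α : Type*} [PseudoMetricSpace α] [ProperSpace α]
    {s : Set α} {x : α} (hs : IsClosed s) (hx : Metric.infEDist x s ≠ ⊤) :
    ∃ y ∈ s, Metric.infEDist x s = edist x y := by
  have hne : s.Nonempty := nonempty_iff_ne_empty.2 fun h => hx (Metric.infEDist_eq_top_iff.2 h)
  obtain ⟨y, hy, h⟩ := hs.exists_infDist_eq_dist hne x
  refine ⟨y, hy, ?_⟩
  rw [edist_dist, ← h, Metric.infDist, ENNReal.ofReal_toReal (Metric.infEDist_ne_top hne)]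

theorem polyhedral_multifunction_error_bound
    {X Y : Type*} [NormedAddCommGroup X] [InnerProductSpace ℝ X] [FiniteDimensional ℝ X]
    [NormedAddCommGroup Y] [InnerProductSpace ℝ Y] [FiniteDimensional ℝ Y]
    (F : X → Set Y)
    (hpoly : ∃ (N : ℕ) (C : Fin N → Set (X × Y)),
      (∀ i, IsPolyhedral (C i)) ∧ {p : X × Y | p.2 ∈ F p.1} = ⋃ i, C i) :
    ∃ κ : ℝ, 0 ≤ κ ∧ ∀ y : Y, {x : X | y ∈ F x}.Nonempty →
      ∃ ε : ℝ, 0 < ε ∧ ∀ x : X,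
        EMetric.infEdist y (F x) ≤ ENNReal.ofReal ε →
        EMetric.infEdist x {x' : X | y ∈ F x'} ≤
          ENNReal.ofReal κ * EMetric.infEdist y (F x) := by
  obtain ⟨N, C, hC, hgraph⟩ := hpoly
  have hmem : ∀ x y, y ∈ F x ↔ ∃ i, (x, y) ∈ C i := fun x y => by
    simpa using Set.ext_iff.1 hgraph (x, y)
  choose κ hκ using fun i => (hC i).exists_dist_fiber_le
  obtain ⟨K, hK, hK0⟩ :=
    ((eventually_all.2 fun i => eventually_ge_atTop (κ i)).and (eventually_ge_atTop 0)).exists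
  refine ⟨K, hK0, fun y _ => ?_⟩
  -- near `y`, only the pieces whose projection contains `y` are met
  obtain ⟨ε, hε, hnear⟩ := Metric.nhds_basis_closedBall.eventually_iff.1
    ((locallyFinite_of_finite _).eventually_subset (fun i => (hC i).image_snd.isClosed) y)
  have hgraph_closed : IsClosed {p : X × Y | p.2 ∈ F p.1} :=
    hgraph ▸ isClosed_iUnion_of_finite fun i => (hC i).isClosed
  refine ⟨ε, hε, fun x hx => ?_⟩
  change Metric.infEDist y (F x) ≤ _ at hx
  change Metric.infEDist x _ ≤ _ * Metric.infEDist y (F x)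
  have hFx_closed : IsClosed (F x) := hgraph_closed.preimage (Continuous.prodMk_right x)
  obtain ⟨y', hy', hyy'⟩ :=
    hFx_closed.exists_infEDist_eq_edist (ne_top_of_le_ne_top ENNReal.ofReal_ne_top hx)
  obtain ⟨i, hi⟩ := (hmem x y').1 hy'
  rw [hyy'] at hx ⊢
  have hy : y ∈ Prod.snd '' C i :=
    hnear (Metric.mem_closedBall'.2 ((edist_le_ofReal hε.le).1 hx)) ⟨_, hi, rfl⟩
  obtain ⟨x₁, hx₁, hdist⟩ := hκ i x y y' hi hy
  calc Metric.infEDist x {x' | y ∈ F x'}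
      ≤ edist x x₁ := Metric.infEDist_le_edist_of_mem ((hmem x₁ y).2 ⟨i, hx₁⟩)
    _ ≤ ENNReal.ofReal (K * dist y y') := by
      rw [edist_dist]
      exact ENNReal.ofReal_le_ofReal (hdist.trans (by gcongr; exact hK i))
    _ = ENNReal.ofReal K * edist y y' := by rw [ENNReal.ofReal_mul hK0, edist_dist]
end

section
/- (Global convergence of SSNAL) Suppose Assumption 2 holds and the solution set of (P) is nonempty. Let {(yᵏ, zᵏ, xᵏ)} be the infinite sequence generated by the inexact augmented Lagrangian method: (y^{k+1}, z^{k+1}) approximately minimizes Ψ_k(y,z) := L_{σ_k}(y, z; xᵏ) under stopping criterion (A), and x^{k+1} = xᵏ − σ_k(A*y^{k+1} + z^{k+1} − c), with σ_k ↑ σ_∞ ≤ ∞. Then the sequence {xᵏ} is bounded and converges to an optimal solution of (P), and {(yᵏ, zᵏ)} is bounded and converges to the unique optimal solution (y*, z*) ∈ int(dom h*) × dom p* of (D). -/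
/-
Rockafellar's analysis of the augmented Lagrangian method as an inexact proximal point method on
the primal objective `f = h ∘ A - ⟨c, ·⟩ + p`. If `x̂` is the proximal point of `xᵏ` for the step
`σ_k`, then `inf Ψ_k = -(f x̂ + ‖x̂ - xᵏ‖² / (2σ_k))`, attained at `y = ∇h(A x̂)`,
`z = c - A*y - (x̂ - xᵏ)/σ_k`, and `Ψ_k (y, z)` exceeds this infimum by at least
`‖xᵏ - σ_k (A*y + z - c) - x̂‖² / (2σ_k)`. Criterion (A) therefore puts `x^{k+1}` within `ε_k` of
`x̂`. Firm nonexpansiveness of the proximal map makes `‖xᵏ - x̄‖` quasi-Fejér for every minimiser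
`x̄`: the sequence is bounded, its proximal residuals are square summable, and lower
semicontinuity makes a cluster point a minimiser, to which the whole sequence then converges.

On the dual side `y* = ∇h(A x̄)` and `z* = c - A*y*`. The Lipschitz gradient gives
`h*(y) ≥ ⟨v, y⟩ - h v + (α_h/4)‖y - ∇h v‖²`, which forces uniqueness of the dual solution and,
together with criterion (A), bounds `(α_h/4)‖y^{k+1} - y*‖²` by
`ε_k² / (2σ_0) + ‖xᵏ - x̄‖ ‖A*y^{k+1} + z^{k+1} - c‖`, which tends to zero. Strong convexity of
`h` on the unit ball around `A x̄` makes `h` grow at least linearly beyond its tangent plane there,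
so `h*` is finite on a ball around `y*`.
-/

open Set Filter Topology Classical

noncomputable section

/-- Convexity of an `EReal`-valued function. -/
def EConvex {E : Type*} [AddCommGroup E] [Module ℝ E] (g : E → EReal) : Prop :=
  ∀ u v : E, ∀ a b : ℝ, 0 ≤ a → 0 ≤ b → a + b = 1 →
    g (a • u + b • v) ≤ (a : EReal) * g u + (b : EReal) * g v

/-- The Fenchel conjugate of a real-valued function. -/
def conjR {E : Type*} [NormedAddCommGroup E] [InnerProductSpace ℝ E]
    (h : E → ℝ) (y : E) : EReal :=
  ⨆ u : E, (((inner ℝ u y : ℝ) - h u : ℝ) : EReal)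

/-- The Fenchel conjugate of an `EReal`-valued function. -/
def conjE {E : Type*} [NormedAddCommGroup E] [InnerProductSpace ℝ E]
    (p : E → EReal) (z : E) : EReal :=
  ⨆ u : E, (((inner ℝ u z : ℝ) : EReal) - p u)

variable {X Y : Type*} [NormedAddCommGroup X] [InnerProductSpace ℝ X] [FiniteDimensional ℝ X]
  [NormedAddCommGroup Y] [InnerProductSpace ℝ Y] [FiniteDimensional ℝ Y]

/-- The augmented Lagrangian function associated with (D):
`L_σ(y,z;x) = h*(y) + p*(z) − ⟨x, A*y + z − c⟩ + (σ/2)‖A*y + z − c‖²`. -/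
def ALfun (A : X →L[ℝ] Y) (c : X) (hstar : Y → EReal) (pstar : X → EReal)
    (σ : ℝ) (x : X) (w : Y × X) : EReal :=
  hstar w.1 + pstar w.2 +
    (((σ / 2) * ‖ContinuousLinearMap.adjoint A w.1 + w.2 - c‖ ^ 2 -
        (inner ℝ x (ContinuousLinearMap.adjoint A w.1 + w.2 - c) : ℝ) : ℝ) : EReal)

open scoped RealInnerProductSpace

theorem le_of_hasDerivAt_of_le_add_sq {g : ℝ → ℝ} {g' C D : ℝ} (hg : HasDerivAt g g' 0)
    (hle : ∀ t : ℝ, 0 < t → t ≤ 1 → g t ≤ g 0 + t * C + t ^ 2 * D) : g' ≤ C := by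
  have hslope : Tendsto (slope g 0) (𝓝[>] 0) (𝓝 g') :=
    (hasDerivAt_iff_tendsto_slope.1 hg).mono_left (nhdsWithin_mono 0 fun t ht => ne_of_gt ht)
  have hbound : Tendsto (fun t : ℝ => C + t * D) (𝓝[>] 0) (𝓝 C) := by
    have : Continuous fun t : ℝ => C + t * D := by fun_prop
    simpa using (this.tendsto 0).mono_left nhdsWithin_le_nhds
  refine le_of_tendsto_of_tendsto hslope hbound ?_
  filter_upwards [Ioc_mem_nhdsGT (zero_lt_one' ℝ)] with t ⟨ht0, ht1⟩
  rw [slope_def_field, sub_zero, div_le_iff₀ ht0]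
  nlinarith [hle t ht0 ht1]

section Smooth

variable {E : Type*} [NormedAddCommGroup E] [InnerProductSpace ℝ E] [CompleteSpace E]
  {f : E → ℝ} {g v : E}

theorem HasGradientAt.hasDerivAt_add_smul (hf : HasGradientAt f g v) (d : E) :
    HasDerivAt (fun t : ℝ => f (v + t • d)) ⟪g, d⟫ 0 := by
  have hline : HasDerivAt (fun t : ℝ => v + t • d) d 0 := by
    simpa using ((hasDerivAt_id (0 : ℝ)).smul_const d).const_add v
  have hf' : HasFDerivAt f (InnerProductSpace.toDual ℝ E g) (v + (0 : ℝ) • d) := by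
    simpa using hf.hasFDerivAt
  have := hf'.comp_hasDerivAt 0 hline
  rwa [InnerProductSpace.toDual_apply_apply] at this

theorem ConvexOn.add_inner_le_of_hasGradientAt (hf : ConvexOn ℝ univ f)
    (hg : HasGradientAt f g v) (u : E) : f v + ⟪g, u - v⟫ ≤ f u := by
  suffices ⟪g, u - v⟫ ≤ f u - f v by linarith
  refine le_of_hasDerivAt_of_le_add_sq (D := 0) (hg.hasDerivAt_add_smul (u - v)) fun t ht0 ht1 => ?_
  have hc := hf.2 (mem_univ v) (mem_univ u) (sub_nonneg.2 ht1) ht0.le (sub_add_cancel 1 t)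
  rw [show (1 - t) • v + t • u = v + t • (u - v) by module, smul_eq_mul, smul_eq_mul] at hc
  simp only [zero_smul, add_zero]
  linarith

theorem StrongConvexOn.add_inner_add_sq_le_of_hasGradientAt {s : Set E} {β : ℝ}
    (hf : StrongConvexOn s β f) (hg : HasGradientAt f g v) (hv : v ∈ s) {u : E} (hu : u ∈ s) :
    f v + ⟪g, u - v⟫ + β / 2 * ‖u - v‖ ^ 2 ≤ f u := by
  suffices ⟪g, u - v⟫ ≤ f u - f v - β / 2 * ‖u - v‖ ^ 2 by linarith
  refine le_of_hasDerivAt_of_le_add_sq (D := β / 2 * ‖u - v‖ ^ 2)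
    (hg.hasDerivAt_add_smul (u - v)) fun t ht0 ht1 => ?_
  have hc := hf.2 hv hu (sub_nonneg.2 ht1) ht0.le (sub_add_cancel 1 t)
  rw [show (1 - t) • v + t • u = v + t • (u - v) by module, smul_eq_mul, smul_eq_mul,
    norm_sub_rev] at hc
  simp only [zero_smul, add_zero]
  nlinarith

theorem ConvexOn.le_add_inner_add_of_lipschitz_gradient {G : E → E} {L : ℝ}
    (hf : ConvexOn ℝ univ f) (hG : ∀ v, HasGradientAt f (G v) v)
    (hL : ∀ u v, ‖G u - G v‖ ≤ L * ‖u - v‖) (v u : E) :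
    f u ≤ f v + ⟪G v, u - v⟫ + L * ‖u - v‖ ^ 2 := by
  have hgrad := hf.add_inner_le_of_hasGradientAt (hG u) v
  have hcs : ⟪G u - G v, u - v⟫ ≤ L * ‖u - v‖ ^ 2 :=
    calc ⟪G u - G v, u - v⟫ ≤ ‖G u - G v‖ * ‖u - v‖ := real_inner_le_norm _ _
      _ ≤ L * ‖u - v‖ * ‖u - v‖ := by gcongr; exact hL u v
      _ = L * ‖u - v‖ ^ 2 := by ring
  have hsplit : ⟪G u, v - u⟫ = -⟪G v, u - v⟫ - ⟪G u - G v, u - v⟫ := by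
    rw [← neg_sub u v, inner_neg_right, inner_sub_left]; ring
  linarith

end Smooth

theorem strongConvexOn_of_forall_add_mul_sq_le {E : Type*} [NormedAddCommGroup E]
    [NormedSpace ℝ E] {K : Set E} {β : ℝ} {f : E → ℝ} (hK : Convex ℝ K)
    (hf : ∀ y' ∈ K, ∀ y ∈ K, ∀ l : ℝ, 0 ≤ l → l ≤ 1 →
      f ((1 - l) • y' + l • y) + β / 2 * l * (1 - l) * ‖y' - y‖ ^ 2 ≤ (1 - l) * f y' + l * f y) :
    StrongConvexOn K β f := by
  refine ⟨hK, fun y' hy' y hy a b ha hb hab => ?_⟩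
  obtain rfl : a = 1 - b := by linarith
  have := hf y' hy' y hy b hb (by linarith)
  simp only [smul_eq_mul]
  linarith

theorem hasDerivAt_sq_norm_add_smul_sub_div {E : Type*} [NormedAddCommGroup E]
    [InnerProductSpace ℝ E] (x u d : E) (σ : ℝ) :
    HasDerivAt (fun t : ℝ => ‖u + t • d - x‖ ^ 2 / (2 * σ)) ⟪σ⁻¹ • (u - x), d⟫ 0 := by
  have hline : HasDerivAt (fun t : ℝ => u + t • d - x) d 0 := by
    simpa using (((hasDerivAt_id (0 : ℝ)).smul_const d).const_add u).sub_const x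
  refine (hline.norm_sq.div_const (2 * σ)).congr_deriv ?_
  rw [zero_smul, add_zero, real_inner_smul_left, mul_div_mul_left _ _ two_ne_zero, div_eq_inv_mul]

section Conjugate

variable {E : Type*} [NormedAddCommGroup E] [InnerProductSpace ℝ E]

theorem le_conjR (f : E → ℝ) (u y : E) : ((⟪u, y⟫ - f u : ℝ) : EReal) ≤ conjR f y :=
  le_iSup (fun u => ((⟪u, y⟫ - f u : ℝ) : EReal)) u

variable [CompleteSpace E] {f : E → ℝ} {g v : E}

theorem ConvexOn.conjR_eq_of_hasGradientAt (hf : ConvexOn ℝ univ f) (hg : HasGradientAt f g v) :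
    conjR f g = ((⟪v, g⟫ - f v : ℝ) : EReal) := by
  refine le_antisymm (iSup_le fun u => EReal.coe_le_coe_iff.2 ?_) (le_conjR f v g)
  have := hf.add_inner_le_of_hasGradientAt hg u
  rw [inner_sub_right, real_inner_comm u, real_inner_comm v] at this
  linarith

theorem ConvexOn.add_sq_le_conjR {G : E → E} {α : ℝ} (hα : 0 < α) (hf : ConvexOn ℝ univ f)
    (hG : ∀ v, HasGradientAt f (G v) v) (hL : ∀ u v, ‖G u - G v‖ ≤ 1 / α * ‖u - v‖) (v y : E) :
    ((⟪v, y⟫ - f v + α / 4 * ‖y - G v‖ ^ 2 : ℝ) : EReal) ≤ conjR f y := by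
  refine le_trans (EReal.coe_le_coe_iff.2 ?_) (le_conjR f (v + (α / 2) • (y - G v)) y)
  have hdes := hf.le_add_inner_add_of_lipschitz_gradient hG hL v (v + (α / 2) • (y - G v))
  have hsq : ⟪y - G v, y - G v⟫ = ‖y - G v‖ ^ 2 := real_inner_self_eq_norm_sq _
  rw [add_sub_cancel_left, norm_smul, Real.norm_of_nonneg (by positivity), real_inner_smul_right,
    ← sub_nonneg] at hdes
  rw [inner_add_left, real_inner_smul_left]
  have key : ⟪y - G v, y⟫ - ⟪G v, y - G v⟫ = ‖y - G v‖ ^ 2 := by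
    rw [real_inner_comm (y - G v) (G v), ← inner_sub_right, hsq]
  field_simp at hdes ⊢
  nlinarith [key]

theorem ConvexOn.add_inner_add_mul_le_of_strongConvexOn {β : ℝ} (hf : ConvexOn ℝ univ f)
    (hs : StrongConvexOn (Metric.closedBall v 1) β f) (hg : HasGradientAt f g v) {u : E}
    (hu : 1 ≤ ‖u - v‖) : f v + ⟪g, u - v⟫ + β / 2 * ‖u - v‖ ≤ f u := by
  set t := ‖u - v‖⁻¹
  have hd : 0 < ‖u - v‖ := by linarith
  have ht : t * ‖u - v‖ = 1 := inv_mul_cancel₀ hd.ne'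
  have ht0 : 0 < t := inv_pos.2 hd
  have ht1 : t ≤ 1 := inv_le_one_of_one_le₀ hu
  have hnear : v + t • (u - v) ∈ Metric.closedBall v 1 := by
    rw [Metric.mem_closedBall, dist_eq_norm, add_sub_cancel_left, norm_smul,
      Real.norm_of_nonneg ht0.le, ht]
  have hstrong :=
    hs.add_inner_add_sq_le_of_hasGradientAt hg (Metric.mem_closedBall_self zero_le_one) hnear
  rw [add_sub_cancel_left, norm_smul, Real.norm_of_nonneg ht0.le, ht,
    real_inner_smul_right] at hstrong
  have hconv := hf.2 (mem_univ v) (mem_univ u) (sub_nonneg.2 ht1) ht0.le (sub_add_cancel 1 t)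
  rw [show (1 - t) • v + t • u = v + t • (u - v) by module, smul_eq_mul, smul_eq_mul] at hconv
  have : β / 2 ≤ t * (f u - f v - ⟪g, u - v⟫) := by nlinarith
  calc f v + ⟪g, u - v⟫ + β / 2 * ‖u - v‖
      ≤ f v + ⟪g, u - v⟫ + t * (f u - f v - ⟪g, u - v⟫) * ‖u - v‖ := by gcongr
    _ = f u := by rw [mul_right_comm, ht]; ring

theorem ConvexOn.gradient_mem_interior_dom_conjR {β : ℝ} (hβ : 0 < β) (hf : ConvexOn ℝ univ f)
    (hs : StrongConvexOn (Metric.closedBall v 1) β f) (hg : HasGradientAt f g v) :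
    g ∈ interior {w | conjR f w ≠ ⊤} := by
  refine mem_interior.2 ⟨Metric.ball g (β / 2), fun y hy => ?_, Metric.isOpen_ball,
    Metric.mem_ball_self (by positivity)⟩
  rw [Metric.mem_ball, dist_eq_norm] at hy
  refine ne_top_of_le_ne_top (EReal.coe_ne_top (⟪v, y⟫ - f v + β / 2)) (iSup_le fun u => ?_)
  rw [EReal.coe_le_coe_iff]
  have hcs : ⟪u - v, y - g⟫ ≤ ‖u - v‖ * (β / 2) :=
    (real_inner_le_norm _ _).trans (by gcongr)
  have hsplit : ⟪u, y⟫ = ⟪v, y⟫ + ⟪g, u - v⟫ + ⟪u - v, y - g⟫ := by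
    simp only [inner_sub_left, inner_sub_right, real_inner_comm g]; ring
  rcases le_or_gt ‖u - v‖ 1 with hu | hu
  · have := hf.add_inner_le_of_hasGradientAt hg u
    nlinarith
  · have := hf.add_inner_add_mul_le_of_strongConvexOn hs hg hu.le
    nlinarith

end Conjugate

theorem LowerSemicontinuous.add_coe {α : Type*} [TopologicalSpace α] {F : α → EReal} {g : α → ℝ}
    (hF : LowerSemicontinuous F) (hg : Continuous g) :
    LowerSemicontinuous fun u => F u + (g u : EReal) :=
  hF.add' (continuous_coe_real_ereal.comp hg).lowerSemicontinuous fun _ =>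
    EReal.continuousAt_add (Or.inr (EReal.coe_ne_bot _)) (Or.inr (EReal.coe_ne_top _))

theorem LowerSemicontinuous.exists_isMin_add_sq_norm_sub {E : Type*} [NormedAddCommGroup E]
    [ProperSpace E] {F : E → EReal} (hF : LowerSemicontinuous F) {xbar : E}
    (hxbar : ∀ u, F xbar ≤ F u) (x : E) {σ : ℝ} (hσ : 0 < σ) :
    ∃ ub, ∀ u, F ub + ((‖ub - x‖ ^ 2 / (2 * σ) : ℝ) : EReal) ≤
      F u + ((‖u - x‖ ^ 2 / (2 * σ) : ℝ) : EReal) := by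
  set φ : E → EReal := fun u => F u + ((‖u - x‖ ^ 2 / (2 * σ) : ℝ) : EReal)
  have hφ : LowerSemicontinuous φ := hF.add_coe (by fun_prop)
  have hfar : ∀ u, ‖xbar - x‖ ≤ ‖u - x‖ → φ xbar ≤ φ u := fun u hu =>
    add_le_add (hxbar u) (EReal.coe_le_coe_iff.2 (by gcongr))
  obtain ⟨ub, -, hub⟩ := (hφ.lowerSemicontinuousOn _).exists_isMinOn
    ⟨xbar, Metric.mem_closedBall.2 (dist_eq_norm xbar x).le⟩ (isCompact_closedBall x ‖xbar - x‖)
  refine ⟨ub, fun u => ?_⟩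
  by_cases hu : u ∈ Metric.closedBall x ‖xbar - x‖
  · exact hub hu
  · rw [Metric.mem_closedBall, dist_eq_norm, not_le] at hu
    exact (hub (Metric.mem_closedBall.2 (dist_eq_norm xbar x).le)).trans (hfar u hu.le)

section Subgradient

variable {E : Type*} [NormedAddCommGroup E] [InnerProductSpace ℝ E]

def HasSubgradientAt (p : E → EReal) (ζ u₀ : E) : Prop :=
  ∀ u, p u₀ + ((⟪ζ, u - u₀⟫ : ℝ) : EReal) ≤ p u

theorem le_conjE {p : E → EReal} {u : E} {r : ℝ} (hp : p u = r) (z : E) :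
    ((⟪u, z⟫ - r : ℝ) : EReal) ≤ conjE p z := by
  have := le_iSup (fun u : E => (((⟪u, z⟫ : ℝ) : EReal) - p u)) u
  rwa [hp, ← EReal.coe_sub] at this

theorem HasSubgradientAt.conjE_eq {p : E → EReal} {ζ u₀ : E} {r : ℝ}
    (hζ : HasSubgradientAt p ζ u₀) (hp : p u₀ = r) :
    conjE p ζ = ((⟪u₀, ζ⟫ - r : ℝ) : EReal) := by
  refine le_antisymm (iSup_le fun u => ?_) (le_conjE hp ζ)
  have hu := hζ u
  rw [hp, ← EReal.coe_add] at hu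
  calc ((⟪u, ζ⟫ : ℝ) : EReal) - p u ≤ ((⟪u, ζ⟫ : ℝ) : EReal) - ((r + ⟪ζ, u - u₀⟫ : ℝ) : EReal) :=
        EReal.sub_le_sub le_rfl hu
    _ = ((⟪u₀, ζ⟫ - r : ℝ) : EReal) := by
        rw [← EReal.coe_sub, inner_sub_right, real_inner_comm u, real_inner_comm u₀]; ring_nf

theorem EConvex.hasSubgradientAt_of_isMin_add {p : E → EReal} (hp : EConvex p)
    (hbot : ∀ u, p u ≠ ⊥) {s : E → ℝ} {g u₀ : E}
    (hs : ∀ d, HasDerivAt (fun t : ℝ => s (u₀ + t • d)) ⟪g, d⟫ 0) (htop : p u₀ ≠ ⊤)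
    (hmin : ∀ u, p u₀ + (s u₀ : EReal) ≤ p u + (s u : EReal)) :
    HasSubgradientAt p (-g) u₀ := by
  intro u
  lift p u₀ to ℝ using ⟨htop, hbot u₀⟩ with r hr
  rcases eq_or_ne (p u) ⊤ with hu | hu
  · rw [hu]; exact le_top
  lift p u to ℝ using ⟨hu, hbot u⟩ with q hq
  rw [← EReal.coe_add, EReal.coe_le_coe_iff, inner_neg_left]
  suffices -⟪g, u - u₀⟫ ≤ q - r by linarith
  refine le_of_hasDerivAt_of_le_add_sq (D := 0) (hs (u - u₀)).neg fun t ht0 ht1 => ?_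
  have hconv := hp u₀ u (1 - t) t (sub_nonneg.2 ht1) ht0.le (sub_add_cancel 1 t)
  rw [← hr, ← hq, show (1 - t) • u₀ + t • u = u₀ + t • (u - u₀) by module, ← EReal.coe_mul,
    ← EReal.coe_mul, ← EReal.coe_add] at hconv
  have hle := (hmin (u₀ + t • (u - u₀))).trans (add_le_add hconv le_rfl)
  rw [← EReal.coe_add, ← EReal.coe_add, EReal.coe_le_coe_iff] at hle
  simp only [Pi.neg_apply, zero_smul, add_zero]
  linarith

theorem HasSubgradientAt.inner_nonpos_of_le {p : E → EReal} {ζ u₀ w : E}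
    (hζ : HasSubgradientAt p ζ u₀) (htop : p u₀ ≠ ⊤) (hbot : p u₀ ≠ ⊥) (hw : p w ≤ p u₀) :
    ⟪ζ, w - u₀⟫ ≤ 0 := by
  have := (hζ w).trans hw
  lift p u₀ to ℝ using ⟨htop, hbot⟩ with r
  rw [← EReal.coe_add, EReal.coe_le_coe_iff] at this
  linarith

theorem HasSubgradientAt.le_coe_sub {p : E → EReal} {ζ u₀ w : E} {r : ℝ}
    (hζ : HasSubgradientAt p ζ u₀) (hw : p w = r) : p u₀ ≤ ((r - ⟪ζ, w - u₀⟫ : ℝ) : EReal) := by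
  rw [EReal.coe_sub, EReal.le_sub_iff_add_le (Or.inl (EReal.coe_ne_bot _))
    (Or.inl (EReal.coe_ne_top _)), ← hw]
  exact hζ w

end Subgradient

section Sequences

variable {a ε : ℕ → ℝ}

theorem le_add_tsum_of_le_add (hε0 : ∀ k, 0 ≤ ε k) (hε : Summable ε)
    (ha : ∀ k, a (k + 1) ≤ a k + ε k) (k : ℕ) : a k ≤ a 0 + ∑' i, ε i := by
  have hpartial : a k ≤ a 0 + ∑ i ∈ Finset.range k, ε i := by
    induction k with
    | zero => simp
    | succ k ih => rw [Finset.sum_range_succ]; linarith [ha k]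
  linarith [hε.sum_le_tsum (Finset.range k) fun i _ => hε0 i]

theorem exists_tendsto_of_le_add (ha0 : ∀ k, 0 ≤ a k) (hε0 : ∀ k, 0 ≤ ε k) (hε : Summable ε)
    (ha : ∀ k, a (k + 1) ≤ a k + ε k) : ∃ L, Tendsto a atTop (𝓝 L) := by
  set S := fun k => ∑ i ∈ Finset.range k, ε i
  have hanti : Antitone fun k => a k - S k := antitone_nat_of_succ_le fun k => by
    simp only [S, Finset.sum_range_succ]; linarith [ha k]
  have hbdd : BddBelow (range fun k => a k - S k) := ⟨-∑' i, ε i, by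
    rintro _ ⟨k, rfl⟩; linarith [ha0 k, hε.sum_le_tsum (Finset.range k) fun i _ => hε0 i]⟩
  have hlim := (tendsto_atTop_ciInf hanti hbdd).add hε.hasSum.tendsto_sum_nat
  simp only [S, sub_add_cancel] at hlim
  exact ⟨_, hlim⟩

theorem summable_of_le_sub_add {u v : ℕ → ℝ} (hu : ∀ k, 0 ≤ u k) (hv : ∀ k, 0 ≤ v k)
    (hε0 : ∀ k, 0 ≤ ε k) (hε : Summable ε) (h : ∀ k, u (k + 1) ≤ u k - v k + ε k) :
    Summable v := by
  refine summable_of_sum_range_le (c := u 0 + ∑' k, ε k) hv fun n => ?_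
  have hpartial : ∑ k ∈ Finset.range n, v k ≤ u 0 - u n + ∑ k ∈ Finset.range n, ε k := by
    induction n with
    | zero => simp
    | succ n ih => rw [Finset.sum_range_succ, Finset.sum_range_succ]; linarith [h n]
  linarith [hu n, hε.sum_le_tsum (Finset.range n) fun k _ => hε0 k]

end Sequences

theorem LowerSemicontinuous.le_of_tendsto {α ι : Type*} [TopologicalSpace α] {l : Filter ι}
    [l.NeBot] {F : α → EReal} (hF : LowerSemicontinuous F) {u : ι → α} {x : α}
    (hu : Tendsto u l (𝓝 x)) {r : ι → ℝ} {L : ℝ} (hr : Tendsto r l (𝓝 L))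
    (hle : ∀ k, F (u k) ≤ r k) : F x ≤ L := by
  by_contra! hlt
  obtain ⟨L', hLL', hL'⟩ := EReal.exists_between_coe_real hlt
  obtain ⟨k, hk, hrk⟩ :=
    ((hu.eventually (hF x _ hL')).and (hr.eventually_lt_const (EReal.coe_lt_coe_iff.1 hLL'))).exists
  exact (hk.trans_le (hle k)).not_ge (EReal.coe_le_coe_iff.2 hrk.le)

theorem sq_norm_sub_add_sq_norm_sub_le {E : Type*} [NormedAddCommGroup E] [InnerProductSpace ℝ E]
    {x u w : E} (h : ⟪x - u, w - u⟫ ≤ 0) : ‖u - w‖ ^ 2 + ‖x - u‖ ^ 2 ≤ ‖x - w‖ ^ 2 := by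
  rw [show x - w = (x - u) + (u - w) by abel, norm_add_sq_real, ← neg_sub w u, inner_neg_right]
  linarith

section ProximalPoint

variable {E : Type*} [NormedAddCommGroup E] [InnerProductSpace ℝ E]

/-- `ub k` is the proximal point of `x k` for the step `σ k` (for convex `F` this is exactly the
subgradient condition), and `x (k + 1)` lies within `ε k` of it. -/
structure IsInexactProxSeq (F : E → EReal) (σ ε : ℕ → ℝ) (x ub : ℕ → E) : Prop where
  hasSubgradientAt : ∀ k, HasSubgradientAt F ((σ k)⁻¹ • (x k - ub k)) (ub k)
  ne_top : ∀ k, F (ub k) ≠ ⊤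
  ne_bot : ∀ k, F (ub k) ≠ ⊥
  norm_succ_sub_prox_le : ∀ k, ‖x (k + 1) - ub k‖ ≤ ε k

namespace IsInexactProxSeq

variable {F : E → EReal} {σ ε : ℕ → ℝ} {x ub : ℕ → E}

theorem sq_norm_sub_add_sq_norm_sub_le (hx : IsInexactProxSeq F σ ε x ub) (hσ : ∀ k, 0 < σ k)
    {w : E} (hw : ∀ u, F w ≤ F u) (k : ℕ) :
    ‖ub k - w‖ ^ 2 + ‖x k - ub k‖ ^ 2 ≤ ‖x k - w‖ ^ 2 := by
  refine _root_.sq_norm_sub_add_sq_norm_sub_le (le_of_mul_le_mul_left ?_ (inv_pos.2 (hσ k)))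
  have := (hx.hasSubgradientAt k).inner_nonpos_of_le (hx.ne_top k) (hx.ne_bot k) (hw (ub k))
  rwa [real_inner_smul_left, ← mul_zero (σ k)⁻¹] at this

theorem norm_prox_sub_le (hx : IsInexactProxSeq F σ ε x ub) (hσ : ∀ k, 0 < σ k) {w : E}
    (hw : ∀ u, F w ≤ F u) (k : ℕ) : ‖ub k - w‖ ≤ ‖x k - w‖ :=
  (pow_le_pow_iff_left₀ (norm_nonneg _) (norm_nonneg _) two_ne_zero).1 <| by
    nlinarith [hx.sq_norm_sub_add_sq_norm_sub_le hσ hw k, sq_nonneg ‖x k - ub k‖]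

theorem norm_succ_sub_le (hx : IsInexactProxSeq F σ ε x ub) (hσ : ∀ k, 0 < σ k) {w : E}
    (hw : ∀ u, F w ≤ F u) (k : ℕ) : ‖x (k + 1) - w‖ ≤ ‖x k - w‖ + ε k := by
  calc ‖x (k + 1) - w‖ ≤ ‖x (k + 1) - ub k‖ + ‖ub k - w‖ :=
        norm_sub_le_norm_sub_add_norm_sub _ _ _
    _ ≤ ε k + ‖x k - w‖ := add_le_add (hx.norm_succ_sub_prox_le k) (hx.norm_prox_sub_le hσ hw k)
    _ = ‖x k - w‖ + ε k := add_comm _ _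

theorem norm_sub_le_add_tsum (hx : IsInexactProxSeq F σ ε x ub) (hσ : ∀ k, 0 < σ k)
    (hε0 : ∀ k, 0 ≤ ε k) (hε : Summable ε) {w : E} (hw : ∀ u, F w ≤ F u) (k : ℕ) :
    ‖x k - w‖ ≤ ‖x 0 - w‖ + ∑' k, ε k :=
  le_add_tsum_of_le_add (a := fun k => ‖x k - w‖) hε0 hε (hx.norm_succ_sub_le hσ hw) k

theorem tendsto_sub_zero (hx : IsInexactProxSeq F σ ε x ub) (hσ : ∀ k, 0 < σ k)
    (hε0 : ∀ k, 0 ≤ ε k) (hε : Summable ε) {w : E} (hw : ∀ u, F w ≤ F u) :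
    Tendsto (fun k => x k - ub k) atTop (𝓝 0) := by
  set C := ‖x 0 - w‖ + ∑' k, ε k
  have hbound := hx.norm_sub_le_add_tsum hσ hε0 hε hw
  have hεle k : ε k ≤ ∑' k, ε k := hε.le_tsum k fun j _ => hε0 j
  have hdecr k : ‖x (k + 1) - w‖ ^ 2 ≤
      ‖x k - w‖ ^ 2 - ‖x k - ub k‖ ^ 2 + ε k * (2 * C + ∑' k, ε k) := by
    have hstep : ‖x (k + 1) - w‖ ≤ ‖ub k - w‖ + ε k := by
      linarith [norm_sub_le_norm_sub_add_norm_sub (x (k + 1)) (ub k) w,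
        hx.norm_succ_sub_prox_le k]
    have hub : ‖ub k - w‖ ≤ C := (hx.norm_prox_sub_le hσ hw k).trans (hbound k)
    nlinarith [hx.sq_norm_sub_add_sq_norm_sub_le hσ hw k, norm_nonneg (x (k + 1) - w),
      norm_nonneg (ub k - w), hε0 k, hεle k]
  have hsum := summable_of_le_sub_add (u := fun k => ‖x k - w‖ ^ 2)
    (v := fun k => ‖x k - ub k‖ ^ 2) (ε := fun k => ε k * (2 * C + ∑' k, ε k))
    (fun k => sq_nonneg _) (fun k => sq_nonneg _)
    (fun k => mul_nonneg (hε0 k) (by linarith [norm_nonneg (x 0 - w), hε0 0, hεle 0]))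
    (hε.mul_right _) hdecr
  have hsqrt := hsum.tendsto_atTop_zero.sqrt
  simp only [Real.sqrt_sq (norm_nonneg _), Real.sqrt_zero] at hsqrt
  exact tendsto_zero_iff_norm_tendsto_zero.2 hsqrt

theorem isMin_of_tendsto_comp (hx : IsInexactProxSeq F σ ε x ub) (hF : LowerSemicontinuous F)
    {σ₀ : ℝ} (hσ₀ : 0 < σ₀) (hσ : ∀ k, σ₀ ≤ σ k) {w : E} (hw : ∀ u, F w ≤ F u) {fw : ℝ}
    (hfw : F w = fw) {C : ℝ} (hC : ∀ k, ‖ub k - w‖ ≤ C)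
    (hb : Tendsto (fun k => x k - ub k) atTop (𝓝 0)) {φ : ℕ → ℕ} (hφ : StrictMono φ) {xinf : E}
    (hxφ : Tendsto (x ∘ φ) atTop (𝓝 xinf)) : ∀ u, F xinf ≤ F u := by
  have hubφ : Tendsto (fun j => ub (φ j)) atTop (𝓝 xinf) := by
    simpa using hxφ.sub (hb.comp hφ.tendsto_atTop)
  have hval k : F (ub k) ≤ ((fw + σ₀⁻¹ * (‖x k - ub k‖ * C) : ℝ) : EReal) := by
    refine ((hx.hasSubgradientAt k).le_coe_sub hfw).trans (EReal.coe_le_coe_iff.2 ?_)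
    have hinv : (σ k)⁻¹ ≤ σ₀⁻¹ := inv_anti₀ hσ₀ (hσ k)
    have hpos : 0 ≤ (σ k)⁻¹ := inv_nonneg.2 (hσ₀.trans_le (hσ k)).le
    calc fw - ⟪(σ k)⁻¹ • (x k - ub k), w - ub k⟫ = fw + (σ k)⁻¹ * ⟪x k - ub k, ub k - w⟫ := by
          rw [real_inner_smul_left, ← neg_sub (ub k) w, inner_neg_right]; ring
      _ ≤ fw + (σ k)⁻¹ * (‖x k - ub k‖ * ‖ub k - w‖) := by gcongr; exact real_inner_le_norm _ _
      _ ≤ fw + σ₀⁻¹ * (‖x k - ub k‖ * C) := by gcongr; exact hC k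
  have hlim : Tendsto (fun k => fw + σ₀⁻¹ * (‖x k - ub k‖ * C)) atTop (𝓝 fw) := by
    simpa using tendsto_const_nhds.add ((hb.norm.mul_const C).const_mul σ₀⁻¹)
  have hle := hF.le_of_tendsto hubφ (hlim.comp hφ.tendsto_atTop) fun k => hval (φ k)
  exact fun u => hle.trans (hfw ▸ hw u)

theorem exists_tendsto [ProperSpace E] (hx : IsInexactProxSeq F σ ε x ub)
    (hF : LowerSemicontinuous F) {σ₀ : ℝ} (hσ₀ : 0 < σ₀) (hσ : ∀ k, σ₀ ≤ σ k)
    (hε0 : ∀ k, 0 ≤ ε k) (hε : Summable ε) {xbar : E} (hxbar : ∀ u, F xbar ≤ F u) {fb : ℝ}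
    (hfb : F xbar = fb) :
    ∃ xinf, (∀ u, F xinf ≤ F u) ∧ Tendsto x atTop (𝓝 xinf) := by
  have hσpos k : 0 < σ k := hσ₀.trans_le (hσ k)
  have hbound := hx.norm_sub_le_add_tsum hσpos hε0 hε hxbar
  obtain ⟨xinf, -, φ, hφ, hxφ⟩ := tendsto_subseq_of_bounded
    (Metric.isBounded_closedBall (x := xbar)) fun k => mem_closedBall_iff_norm.2 (hbound k)
  have hmin := hx.isMin_of_tendsto_comp hF hσ₀ hσ hxbar hfb
    (fun k => (hx.norm_prox_sub_le hσpos hxbar k).trans (hbound k))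
    (hx.tendsto_sub_zero hσpos hε0 hε hxbar) hφ hxφ
  obtain ⟨L, hL⟩ := exists_tendsto_of_le_add (fun k => norm_nonneg (x k - xinf)) hε0 hε
    (hx.norm_succ_sub_le hσpos hmin)
  have hL0 : L = 0 :=
    tendsto_nhds_unique (hL.comp hφ.tendsto_atTop) (tendsto_iff_norm_sub_tendsto_zero.1 hxφ)
  exact ⟨xinf, hmin, tendsto_iff_norm_sub_tendsto_zero.2 (hL0 ▸ hL)⟩

end IsInexactProxSeq

end ProximalPoint

section Problem

variable {E F : Type*} [NormedAddCommGroup E] [InnerProductSpace ℝ E]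
  [NormedAddCommGroup F] [InnerProductSpace ℝ F]
  (A : E →L[ℝ] F) (c : E) (h : F → ℝ) (p : E → EReal)

/-- (P) is the maximisation of `-primalObj`. -/
def primalObj (u : E) : EReal := ((h (A u) - ⟪c, u⟫ : ℝ) : EReal) + p u

theorem primalObj_add_coe (u : E) (q : ℝ) :
    primalObj A c h p u + (q : EReal) = p u + ((h (A u) - ⟪c, u⟫ + q : ℝ) : EReal) := by
  rw [primalObj, EReal.coe_add]; abel

theorem primalObj_eq_coe {u : E} {r : ℝ} (hp : p u = r) :
    primalObj A c h p u = ((h (A u) - ⟪c, u⟫ + r : ℝ) : EReal) := by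
  rw [primalObj, hp, EReal.coe_add]

theorem primalObj_eq_top_iff (u : E) : primalObj A c h p u = ⊤ ↔ p u = ⊤ := by
  rw [primalObj]
  generalize h (A u) - ⟪c, u⟫ = a
  induction p u using EReal.rec <;> simp [← EReal.coe_add]

variable {A c h p}

theorem lowerSemicontinuous_primalObj (hh : Continuous h) (hp : LowerSemicontinuous p) :
    LowerSemicontinuous (primalObj A c h p) := by
  have hcomm : primalObj A c h p = fun u => p u + ((h (A u) - ⟪c, u⟫ : ℝ) : EReal) :=
    funext fun u => add_comm _ _
  rw [hcomm]
  exact hp.add_coe (by fun_prop)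

theorem exists_eq_coe_of_isMin (hpbot : ∀ u, p u ≠ ⊥) (hpne : ∃ u, p u ≠ ⊤) {xs : E}
    (hmin : ∀ u, primalObj A c h p xs ≤ primalObj A c h p u) : ∃ r : ℝ, p xs = r := by
  obtain ⟨u, hu⟩ := hpne
  have htop : p xs ≠ ⊤ := by
    rw [Ne, ← primalObj_eq_top_iff A c h p xs]
    exact ne_top_of_le_ne_top ((primalObj_eq_top_iff A c h p u).not.2 hu) (hmin u)
  exact ⟨(p xs).toReal, (EReal.coe_toReal htop (hpbot xs)).symm⟩

variable [CompleteSpace E] [CompleteSpace F] {G : F → F}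

variable (A c) in
theorem inner_apply_add_inner_eq (u : E) (y : F) (z : E) :
    ⟪A u, y⟫ + ⟪u, z⟫ = ⟪u, A.adjoint y + z - c⟫ + ⟪c, u⟫ := by
  rw [inner_sub_right, inner_add_right, ContinuousLinearMap.adjoint_inner_right,
    real_inner_comm c]
  ring

theorem hasDerivAt_apply_add_smul_sub_inner (hG : ∀ y, HasGradientAt h (G y) y) (u d : E) :
    HasDerivAt (fun t : ℝ => h (A (u + t • d)) - ⟪c, u + t • d⟫)
      ⟪A.adjoint (G (A u)) - c, d⟫ 0 := by
  have hsmooth : HasDerivAt (fun t : ℝ => h (A (u + t • d))) ⟪A.adjoint (G (A u)), d⟫ 0 := by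
    simpa only [map_add, map_smul, ContinuousLinearMap.adjoint_inner_left] using
      (hG (A u)).hasDerivAt_add_smul (A d)
  have hlin : HasDerivAt (fun t : ℝ => ⟪c, u + t • d⟫) ⟪c, d⟫ 0 := by
    simpa only [inner_add_right, inner_smul_right, id, one_mul] using
      ((hasDerivAt_id (0 : ℝ)).mul_const ⟪c, d⟫).const_add ⟪c, u⟫
  have := hsmooth.sub hlin
  rwa [← inner_sub_left] at this

theorem hasSubgradientAt_of_isMin_primalObj_add (hG : ∀ y, HasGradientAt h (G y) y)
    (hp : EConvex p) (hbot : ∀ u, p u ≠ ⊥) {σ : ℝ} {x ub : E} (htop : p ub ≠ ⊤)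
    (hmin : ∀ u, primalObj A c h p ub + ((‖ub - x‖ ^ 2 / (2 * σ) : ℝ) : EReal) ≤
      primalObj A c h p u + ((‖u - x‖ ^ 2 / (2 * σ) : ℝ) : EReal)) :
    HasSubgradientAt p (c - A.adjoint (G (A ub)) - σ⁻¹ • (ub - x)) ub := by
  have hsub := hp.hasSubgradientAt_of_isMin_add hbot
    (s := fun u => h (A u) - ⟪c, u⟫ + ‖u - x‖ ^ 2 / (2 * σ))
    (g := A.adjoint (G (A ub)) - c + σ⁻¹ • (ub - x))
    (fun d => by
      have := (hasDerivAt_apply_add_smul_sub_inner (A := A) (c := c) hG ub d).add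
        (hasDerivAt_sq_norm_add_smul_sub_div x ub d σ)
      rwa [← inner_add_left] at this)
    htop (fun u => by simpa only [primalObj_add_coe] using hmin u)
  convert hsub using 1
  abel

theorem hasSubgradientAt_of_isMin_primalObj (hG : ∀ y, HasGradientAt h (G y) y)
    (hp : EConvex p) (hbot : ∀ u, p u ≠ ⊥) {xs : E} (htop : p xs ≠ ⊤)
    (hmin : ∀ u, primalObj A c h p xs ≤ primalObj A c h p u) :
    HasSubgradientAt p (c - A.adjoint (G (A xs))) xs := by
  have := hasSubgradientAt_of_isMin_primalObj_add (σ := 1) (x := xs) hG hp hbot htop fun u =>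
    add_le_add (hmin u) (EReal.coe_le_coe_iff.2 (by
      rw [sub_self, norm_zero, zero_pow two_ne_zero, zero_div]; positivity))
  simpa using this

theorem HasSubgradientAt.to_primalObj (hh : ConvexOn ℝ univ h) (hG : ∀ y, HasGradientAt h (G y) y)
    {ζ u₀ : E} (hζ : HasSubgradientAt p ζ u₀) :
    HasSubgradientAt (primalObj A c h p) (A.adjoint (G (A u₀)) - c + ζ) u₀ := by
  intro u
  have hgrad := hh.add_inner_le_of_hasGradientAt (hG (A u₀)) (A u)
  rw [← map_sub, ← ContinuousLinearMap.adjoint_inner_left] at hgrad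
  have hreal : h (A u₀) - ⟪c, u₀⟫ + ⟪A.adjoint (G (A u₀)) - c, u - u₀⟫ ≤ h (A u) - ⟪c, u⟫ := by
    simp only [inner_sub_left, inner_sub_right] at hgrad ⊢; linarith
  calc primalObj A c h p u₀ + ((⟪A.adjoint (G (A u₀)) - c + ζ, u - u₀⟫ : ℝ) : EReal)
      = ((h (A u₀) - ⟪c, u₀⟫ + ⟪A.adjoint (G (A u₀)) - c, u - u₀⟫ : ℝ) : EReal) +
          (p u₀ + ((⟪ζ, u - u₀⟫ : ℝ) : EReal)) := by
        rw [primalObj, inner_add_left, EReal.coe_add, EReal.coe_add]; abel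
    _ ≤ primalObj A c h p u := add_le_add (EReal.coe_le_coe_iff.2 hreal) (hζ u)

theorem coe_le_conjR_add_conjE {α : ℝ} (hα : 0 < α) (hh : ConvexOn ℝ univ h)
    (hG : ∀ y, HasGradientAt h (G y) y) (hL : ∀ y y', ‖G y - G y'‖ ≤ 1 / α * ‖y - y'‖)
    {u : E} {r : ℝ} (hp : p u = r) (y : F) (z : E) :
    ((⟪u, A.adjoint y + z - c⟫ - (h (A u) - ⟪c, u⟫ + r) + α / 4 * ‖y - G (A u)‖ ^ 2 : ℝ) : EReal) ≤
      conjR h y + conjE p z := by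
  refine le_trans (le_of_eq ?_) (add_le_add (hh.add_sq_le_conjR hα hG hL (A u) y) (le_conjE hp z))
  rw [← EReal.coe_add]
  congr 1
  linear_combination -inner_apply_add_inner_eq A c u y z

theorem conjR_add_conjE_eq (hh : ConvexOn ℝ univ h) (hG : ∀ y, HasGradientAt h (G y) y)
    {u ζ : E} {r : ℝ} (hp : p u = r) (hζ : HasSubgradientAt p ζ u) :
    conjR h (G (A u)) + conjE p ζ =
      ((⟪u, A.adjoint (G (A u)) + ζ - c⟫ - (h (A u) - ⟪c, u⟫ + r) : ℝ) : EReal) := by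
  rw [hh.conjR_eq_of_hasGradientAt (hG (A u)), hζ.conjE_eq hp, ← EReal.coe_add]
  congr 1
  linear_combination inner_apply_add_inner_eq A c u (G (A u)) ζ

end Problem

section AugmentedLagrangian

variable {A : X →L[ℝ] Y} {c : X} {h : Y → ℝ} {G : Y → Y} {p : X → EReal} {σ : ℝ} {x ub : X}
  {r : ℝ}

theorem ALfun_prox_eq (hh : ConvexOn ℝ univ h) (hG : ∀ y, HasGradientAt h (G y) y)
    (hσ : 0 < σ) (hp : p ub = r)
    (hζ : HasSubgradientAt p (c - A.adjoint (G (A ub)) - σ⁻¹ • (ub - x)) ub) :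
    ALfun A c (conjR h) (conjE p) σ x (G (A ub), c - A.adjoint (G (A ub)) - σ⁻¹ • (ub - x)) =
      ((-(h (A ub) - ⟪c, ub⟫ + r + ‖ub - x‖ ^ 2 / (2 * σ)) : ℝ) : EReal) := by
  have hres : A.adjoint (G (A ub)) + (c - A.adjoint (G (A ub)) - σ⁻¹ • (ub - x)) - c =
      -(σ⁻¹ • (ub - x)) := by abel
  have hinner : ⟪ub, σ⁻¹ • (ub - x)⟫ - ⟪x, σ⁻¹ • (ub - x)⟫ = σ⁻¹ * ‖ub - x‖ ^ 2 := by
    rw [← inner_sub_left, real_inner_smul_right, real_inner_self_eq_norm_sq]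
  rw [ALfun, conjR_add_conjE_eq hh hG hp hζ, hres, ← EReal.coe_add]
  congr 1
  have hs : σ * σ⁻¹ = 1 := mul_inv_cancel₀ hσ.ne'
  rw [norm_neg, norm_smul, Real.norm_of_nonneg (inv_nonneg.2 hσ.le), inner_neg_right,
    inner_neg_right, show ‖ub - x‖ ^ 2 / (2 * σ) = σ⁻¹ / 2 * ‖ub - x‖ ^ 2 by ring]
  linear_combination (-1 : ℝ) * hinner + (σ⁻¹ * ‖ub - x‖ ^ 2 / 2) * hs

theorem coe_le_ALfun {α : ℝ} (hα : 0 < α) (hh : ConvexOn ℝ univ h)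
    (hG : ∀ y, HasGradientAt h (G y) y) (hL : ∀ y y', ‖G y - G y'‖ ≤ 1 / α * ‖y - y'‖)
    (hσ : 0 < σ) (hp : p ub = r) (w : Y × X) :
    ((-(h (A ub) - ⟪c, ub⟫ + r + ‖ub - x‖ ^ 2 / (2 * σ)) +
        ‖x - σ • (A.adjoint w.1 + w.2 - c) - ub‖ ^ 2 / (2 * σ) : ℝ) : EReal) ≤
      ALfun A c (conjR h) (conjE p) σ x w := by
  refine le_trans ?_
    (add_le_add (coe_le_conjR_add_conjE (A := A) (c := c) hα hh hG hL hp w.1 w.2) le_rfl)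
  rw [← EReal.coe_add, EReal.coe_le_coe_iff]
  set res := A.adjoint w.1 + w.2 - c
  have hexpand : ‖x - σ • res - ub‖ ^ 2 / (2 * σ) =
      ‖ub - x‖ ^ 2 / (2 * σ) + ⟪ub - x, res⟫ + σ / 2 * ‖res‖ ^ 2 := by
    rw [show x - σ • res - ub = -((ub - x) + σ • res) by abel, norm_neg, norm_add_sq_real,
      real_inner_smul_right, norm_smul, Real.norm_of_nonneg hσ.le]
    field_simp
  rw [hexpand, inner_sub_left]
  nlinarith [sq_nonneg ‖w.1 - G (A ub)‖]

theorem ALfun_le_of_le_iInf_add (hh : ConvexOn ℝ univ h) (hG : ∀ y, HasGradientAt h (G y) y)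
    (hσ : 0 < σ) (hp : p ub = r)
    (hζ : HasSubgradientAt p (c - A.adjoint (G (A ub)) - σ⁻¹ • (ub - x)) ub) {ε : ℝ} {w : Y × X}
    (hw : ALfun A c (conjR h) (conjE p) σ x w ≤
      (⨅ w', ALfun A c (conjR h) (conjE p) σ x w') + ((ε ^ 2 / (2 * σ) : ℝ) : EReal)) :
    ALfun A c (conjR h) (conjE p) σ x w ≤
      ((-(h (A ub) - ⟪c, ub⟫ + r + ‖ub - x‖ ^ 2 / (2 * σ)) + ε ^ 2 / (2 * σ) : ℝ) : EReal) := by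
  refine hw.trans ?_
  rw [EReal.coe_add, ← ALfun_prox_eq hh hG hσ hp hζ]
  exact add_le_add (iInf_le _ _) le_rfl

theorem norm_sub_le_of_le_iInf_add {α : ℝ} (hα : 0 < α) (hh : ConvexOn ℝ univ h)
    (hG : ∀ y, HasGradientAt h (G y) y) (hL : ∀ y y', ‖G y - G y'‖ ≤ 1 / α * ‖y - y'‖)
    (hσ : 0 < σ) (hp : p ub = r)
    (hζ : HasSubgradientAt p (c - A.adjoint (G (A ub)) - σ⁻¹ • (ub - x)) ub) {ε : ℝ}
    (hε : 0 ≤ ε) {w : Y × X}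
    (hw : ALfun A c (conjR h) (conjE p) σ x w ≤
      (⨅ w', ALfun A c (conjR h) (conjE p) σ x w') + ((ε ^ 2 / (2 * σ) : ℝ) : EReal)) :
    ‖x - σ • (A.adjoint w.1 + w.2 - c) - ub‖ ≤ ε := by
  have := (coe_le_ALfun hα hh hG hL hσ hp w).trans (ALfun_le_of_le_iInf_add hh hG hσ hp hζ hw)
  rw [EReal.coe_le_coe_iff, add_le_add_iff_left,
    div_le_div_iff_of_pos_right (by positivity)] at this
  exact (pow_le_pow_iff_left₀ (norm_nonneg _) hε two_ne_zero).1 this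

theorem sq_norm_sub_le_of_ALfun_le {α : ℝ} (hα : 0 < α) (hh : ConvexOn ℝ univ h)
    (hG : ∀ y, HasGradientAt h (G y) y) (hL : ∀ y y', ‖G y - G y'‖ ≤ 1 / α * ‖y - y'‖)
    (hσ : 0 < σ) {xs : X} {rs M : ℝ} (hps : p xs = rs) (hM : h (A xs) - ⟪c, xs⟫ + rs ≤ M)
    {ε : ℝ} {w : Y × X}
    (hw : ALfun A c (conjR h) (conjE p) σ x w ≤ ((-M + ε ^ 2 / (2 * σ) : ℝ) : EReal)) :
    α / 4 * ‖w.1 - G (A xs)‖ ^ 2 ≤ ε ^ 2 / (2 * σ) + ‖x - xs‖ * ‖A.adjoint w.1 + w.2 - c‖ := by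
  have hlow := (add_le_add
    (coe_le_conjR_add_conjE (A := A) (c := c) hα hh hG hL hps w.1 w.2) le_rfl).trans hw
  rw [← EReal.coe_add, EReal.coe_le_coe_iff] at hlow
  have hcs := real_inner_le_norm (x - xs) (A.adjoint w.1 + w.2 - c)
  rw [inner_sub_left] at hcs
  have : 0 ≤ σ / 2 * ‖A.adjoint w.1 + w.2 - c‖ ^ 2 := by positivity
  linarith

end AugmentedLagrangian

section SSNAL

variable {A : X →L[ℝ] Y} {c : X} {h : Y → ℝ} {G : Y → Y} {p : X → EReal} {α : ℝ}

theorem exists_prox_of_le_iInf_add (hα : 0 < α) (hh : ConvexOn ℝ univ h)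
    (hG : ∀ y, HasGradientAt h (G y) y) (hL : ∀ y y', ‖G y - G y'‖ ≤ 1 / α * ‖y - y'‖)
    (hpconv : EConvex p) (hplsc : LowerSemicontinuous p) (hpbot : ∀ u, p u ≠ ⊥) {xbar : X}
    (hxbar : ∀ u, primalObj A c h p xbar ≤ primalObj A c h p u) {fb : ℝ}
    (hfb : primalObj A c h p xbar = fb) {σ ε : ℝ} (hσ : 0 < σ) (hε : 0 ≤ ε) (x : X)
    {w : Y × X} (hw : ALfun A c (conjR h) (conjE p) σ x w ≤
      (⨅ w', ALfun A c (conjR h) (conjE p) σ x w') + ((ε ^ 2 / (2 * σ) : ℝ) : EReal)) :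
    ∃ ub, HasSubgradientAt (primalObj A c h p) (σ⁻¹ • (x - ub)) ub ∧
      primalObj A c h p ub ≠ ⊤ ∧ primalObj A c h p ub ≠ ⊥ ∧
      ‖x - σ • (A.adjoint w.1 + w.2 - c) - ub‖ ≤ ε ∧
      ALfun A c (conjR h) (conjE p) σ x w ≤ ((-fb + ε ^ 2 / (2 * σ) : ℝ) : EReal) := by
  obtain ⟨ub, hub⟩ := (lowerSemicontinuous_primalObj
    (Differentiable.continuous fun y => (hG y).differentiableAt) hplsc).exists_isMin_add_sq_norm_sub
      hxbar x hσ
  have hFtop : primalObj A c h p ub ≠ ⊤ := fun htop => by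
    simpa [htop, hfb, ← EReal.coe_add] using hub xbar
  obtain ⟨r, hr⟩ : ∃ r : ℝ, p ub = r :=
    ⟨(p ub).toReal, (EReal.coe_toReal ((primalObj_eq_top_iff A c h p ub).not.1 hFtop)
      (hpbot ub)).symm⟩
  have hζ := hasSubgradientAt_of_isMin_primalObj_add hG hpconv hpbot (by simp [hr]) hub
  have hM : fb ≤ h (A ub) - ⟪c, ub⟫ + r + ‖ub - x‖ ^ 2 / (2 * σ) := by
    have := hxbar ub
    rw [hfb, primalObj_eq_coe A c h p hr, EReal.coe_le_coe_iff] at this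
    linarith [show 0 ≤ ‖ub - x‖ ^ 2 / (2 * σ) by positivity]
  refine ⟨ub, ?_, hFtop, by rw [primalObj_eq_coe A c h p hr]; exact EReal.coe_ne_bot _,
    norm_sub_le_of_le_iInf_add hα hh hG hL hσ hr hζ hε hw,
    (ALfun_le_of_le_iInf_add hh hG hσ hr hζ hw).trans (EReal.coe_le_coe_iff.2 (by linarith))⟩
  convert hζ.to_primalObj hh hG using 1
  module

theorem tendsto_dual_of_ALfun_le (hα : 0 < α) (hh : ConvexOn ℝ univ h)
    (hG : ∀ y, HasGradientAt h (G y) y) (hL : ∀ y y', ‖G y - G y'‖ ≤ 1 / α * ‖y - y'‖)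
    {x z : ℕ → X} {y : ℕ → Y} {σ ε : ℕ → ℝ} {σ₀ : ℝ} (hσ₀ : 0 < σ₀) (hσ : ∀ k, σ₀ ≤ σ k)
    (hε : Tendsto ε atTop (𝓝 0)) {xs : X} {rs M : ℝ} (hps : p xs = rs)
    (hM : h (A xs) - ⟪c, xs⟫ + rs ≤ M) (hx : Tendsto x atTop (𝓝 xs))
    (hAL : ∀ k, ALfun A c (conjR h) (conjE p) (σ k) (x k) (y (k + 1), z (k + 1)) ≤
      ((-M + ε k ^ 2 / (2 * σ k) : ℝ) : EReal))
    (hupdate : ∀ k, x (k + 1) = x k - σ k • (A.adjoint (y (k + 1)) + z (k + 1) - c)) :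
    Tendsto (fun k => (y k, z k)) atTop (𝓝 (G (A xs), c - A.adjoint (G (A xs)))) := by
  set res := fun k => A.adjoint (y (k + 1)) + z (k + 1) - c
  have hσpos k : 0 < σ k := hσ₀.trans_le (hσ k)
  have hres : Tendsto res atTop (𝓝 0) := by
    have hdiff : Tendsto (fun k => x k - x (k + 1)) atTop (𝓝 0) := by
      simpa using hx.sub (hx.comp (tendsto_add_atTop_nat 1))
    refine squeeze_zero_norm (fun k => ?_) (by simpa using hdiff.norm.const_mul σ₀⁻¹)
    rw [show x k - x (k + 1) = σ k • res k by rw [hupdate k]; abel, norm_smul,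
      Real.norm_of_nonneg (hσpos k).le, le_inv_mul_iff₀ hσ₀]
    gcongr
    exact hσ k
  have hbound k : ‖y (k + 1) - G (A xs)‖ ^ 2 ≤
      4 / α * (ε k ^ 2 / (2 * σ₀) + ‖x k - xs‖ * ‖res k‖) := by
    have hk := sq_norm_sub_le_of_ALfun_le hα hh hG hL (hσpos k) hps hM (hAL k)
    have hεk : ε k ^ 2 / (2 * σ k) ≤ ε k ^ 2 / (2 * σ₀) := by gcongr; exact hσ k
    calc ‖y (k + 1) - G (A xs)‖ ^ 2 = 4 / α * (α / 4 * ‖y (k + 1) - G (A xs)‖ ^ 2) := by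
          field_simp
      _ ≤ 4 / α * (ε k ^ 2 / (2 * σ₀) + ‖x k - xs‖ * ‖res k‖) := by
          gcongr
          exact hk.trans (by simp only [res]; linarith)
  have hy : Tendsto (fun k => y (k + 1)) atTop (𝓝 (G (A xs))) := by
    have hsq : Tendsto (fun k => ‖y (k + 1) - G (A xs)‖ ^ 2) atTop (𝓝 0) := by
      refine squeeze_zero (fun k => sq_nonneg _) hbound ?_
      simpa using (((hε.pow 2).div_const (2 * σ₀)).add
        ((hx.sub_const xs).norm.mul hres.norm)).const_mul (4 / α)
    rw [tendsto_iff_norm_sub_tendsto_zero]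
    simpa [Real.sqrt_sq (norm_nonneg _)] using hsq.sqrt
  have hz : Tendsto (fun k => z (k + 1)) atTop (𝓝 (c - A.adjoint (G (A xs)))) := by
    have := (hres.add_const c).sub ((A.adjoint.continuous.tendsto _).comp hy)
    simpa [res] using this
  exact (tendsto_add_atTop_iff_nat 1).1 (hy.prodMk_nhds hz)

theorem dual_solution_of_isMin (hα : 0 < α) (hh : ConvexOn ℝ univ h)
    (hG : ∀ y, HasGradientAt h (G y) y) (hL : ∀ y y', ‖G y - G y'‖ ≤ 1 / α * ‖y - y'‖)
    (hpconv : EConvex p) (hpbot : ∀ u, p u ≠ ⊥) {xs : X}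
    (hmin : ∀ u, primalObj A c h p xs ≤ primalObj A c h p u) {r : ℝ} (hr : p xs = r) {β : ℝ}
    (hβ : 0 < β) (hs : StrongConvexOn (Metric.closedBall (A xs) 1) β h) :
    G (A xs) ∈ interior {w | conjR h w ≠ ⊤} ∧ conjE p (c - A.adjoint (G (A xs))) ≠ ⊤ ∧
      A.adjoint (G (A xs)) + (c - A.adjoint (G (A xs))) = c ∧
      (∀ y' z', A.adjoint y' + z' = c →
        conjR h (G (A xs)) + conjE p (c - A.adjoint (G (A xs))) ≤ conjR h y' + conjE p z') ∧
      (∀ y' z', A.adjoint y' + z' = c →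
        conjR h y' + conjE p z' ≤ conjR h (G (A xs)) + conjE p (c - A.adjoint (G (A xs))) →
        (y', z') = (G (A xs), c - A.adjoint (G (A xs)))) := by
  have hζ := hasSubgradientAt_of_isMin_primalObj hG hpconv hpbot (by simp [hr]) hmin
  have hval : conjR h (G (A xs)) + conjE p (c - A.adjoint (G (A xs))) =
      ((-(h (A xs) - ⟪c, xs⟫ + r)) : ℝ) := by
    rw [conjR_add_conjE_eq hh hG hr hζ, add_sub_cancel, sub_self, inner_zero_right, zero_sub]
  have hlow y' z' (hf : A.adjoint y' + z' = c) :
      ((-(h (A xs) - ⟪c, xs⟫ + r) + α / 4 * ‖y' - G (A xs)‖ ^ 2 : ℝ) : EReal) ≤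
        conjR h y' + conjE p z' := by
    simpa [hf] using coe_le_conjR_add_conjE (A := A) (c := c) hα hh hG hL hr y' z'
  refine ⟨hh.gradient_mem_interior_dom_conjR hβ hs (hG _),
    by rw [hζ.conjE_eq hr]; exact EReal.coe_ne_top _, add_sub_cancel _ _,
    fun y' z' hf => hval ▸ le_trans (EReal.coe_le_coe_iff.2 ?_) (hlow y' z' hf),
    fun y' z' hf hle => ?_⟩
  · have := sq_nonneg ‖y' - G (A xs)‖
    nlinarith
  · have hsq := (hlow y' z' hf).trans (hle.trans hval.le)
    rw [EReal.coe_le_coe_iff] at hsq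
    have hy : y' = G (A xs) := by
      rw [← sub_eq_zero, ← norm_eq_zero, ← sq_eq_zero_iff]
      nlinarith [sq_nonneg ‖y' - G (A xs)‖]
    subst hy
    exact Prod.ext rfl (eq_sub_of_add_eq' hf)

end SSNAL

theorem ssnal_global_convergence
    (A : X →L[ℝ] Y) (c : X)
    (h : Y → ℝ) (Gh : Y → Y) (αh : ℝ) (p : X → EReal)
    -- Assumption 2(a): h convex differentiable with 1/α_h-Lipschitz gradient
    (hαh : 0 < αh)
    (hconv : ConvexOn ℝ Set.univ h)
    (hdiff : ∀ y, HasGradientAt h (Gh y) y)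
    (hlip : ∀ y y' : Y, ‖Gh y - Gh y'‖ ≤ (1 / αh) * ‖y - y'‖)
    -- Assumption 2(b): h is essentially locally strongly convex
    (helsc : ∀ K : Set Y, IsCompact K → Convex ℝ K → ∃ β : ℝ, 0 < β ∧
      ∀ y' ∈ K, ∀ y ∈ K, ∀ l : ℝ, 0 ≤ l → l ≤ 1 →
        h ((1 - l) • y' + l • y) + β / 2 * l * (1 - l) * ‖y' - y‖ ^ 2 ≤
          (1 - l) * h y' + l * h y)
    -- p closed proper convex
    (pconv : EConvex p) (plsc : LowerSemicontinuous p)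
    (pbot : ∀ x, p x ≠ ⊥) (pne : ∃ x, p x ≠ ⊤)
    -- the solution set of (P) is nonempty
    (hsolP : ∃ xbar : X, ∀ x : X,
      (((h (A xbar) - (inner ℝ c xbar : ℝ)) : ℝ) : EReal) + p xbar ≤
        (((h (A x) - (inner ℝ c x : ℝ)) : ℝ) : EReal) + p x)
    -- the iterates of the inexact augmented Lagrangian method
    (x : ℕ → X) (y : ℕ → Y) (z : ℕ → X) (σ : ℕ → ℝ) (ε : ℕ → ℝ)
    (hσpos : ∀ k, 0 < σ k) (hσmono : Monotone σ)
    -- stopping criterion (A)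
    (hεnonneg : ∀ k, 0 ≤ ε k) (hεsum : Summable ε)
    (hcritA : ∀ k : ℕ,
      ALfun A c (conjR h) (conjE p) (σ k) (x k) (y (k + 1), z (k + 1)) ≤
        (⨅ w : Y × X, ALfun A c (conjR h) (conjE p) (σ k) (x k) w) +
          ((ε k ^ 2 / (2 * σ k) : ℝ) : EReal))
    -- multiplier update
    (hupdate : ∀ k : ℕ,
      x (k + 1) = x k - σ k • (ContinuousLinearMap.adjoint A (y (k + 1)) + z (k + 1) - c)) :
    -- conclusions
    Bornology.IsBounded (Set.range x) ∧
    (∃ xopt : X,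
      (∀ x' : X,
        (((h (A xopt) - (inner ℝ c xopt : ℝ)) : ℝ) : EReal) + p xopt ≤
          (((h (A x') - (inner ℝ c x' : ℝ)) : ℝ) : EReal) + p x') ∧
      Tendsto x atTop (𝓝 xopt)) ∧
    Bornology.IsBounded (Set.range fun k => (y k, z k)) ∧
    (∃ (ystar : Y) (zstar : X),
      ystar ∈ interior {w : Y | conjR h w ≠ ⊤} ∧
      conjE p zstar ≠ ⊤ ∧
      ContinuousLinearMap.adjoint A ystar + zstar = c ∧
      (∀ (y' : Y) (z' : X), ContinuousLinearMap.adjoint A y' + z' = c →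
        conjR h ystar + conjE p zstar ≤ conjR h y' + conjE p z') ∧
      (∀ (y' : Y) (z' : X), ContinuousLinearMap.adjoint A y' + z' = c →
        conjR h y' + conjE p z' ≤ conjR h ystar + conjE p zstar →
        (y', z') = (ystar, zstar)) ∧
      Tendsto (fun k => (y k, z k)) atTop (𝓝 (ystar, zstar))) := by
  obtain ⟨xbar, hxbar⟩ : ∃ xbar, ∀ u, primalObj A c h p xbar ≤ primalObj A c h p u := hsolP
  obtain ⟨rb, hrb⟩ := exists_eq_coe_of_isMin pbot pne hxbar
  have hfb := primalObj_eq_coe A c h p hrb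
  choose ub hsub htop hbot hclose hAL using fun k => exists_prox_of_le_iInf_add hαh hconv hdiff
    hlip pconv plsc pbot hxbar hfb (hσpos k) (hεnonneg k) (x k) (hcritA k)
  simp only [← hupdate] at hclose
  have hσ k : σ 0 ≤ σ k := hσmono (Nat.zero_le k)
  obtain ⟨xinf, hmin, hx⟩ := IsInexactProxSeq.exists_tendsto ⟨hsub, htop, hbot, hclose⟩
    (lowerSemicontinuous_primalObj (Differentiable.continuous fun y => (hdiff y).differentiableAt)
      plsc) (hσpos 0) hσ hεnonneg hεsum hxbar hfb
  obtain ⟨rs, hrs⟩ := exists_eq_coe_of_isMin pbot pne hmin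
  have hM := hmin xbar
  rw [primalObj_eq_coe A c h p hrs, hfb, EReal.coe_le_coe_iff] at hM
  have hyz := tendsto_dual_of_ALfun_le hαh hconv hdiff hlip (hσpos 0) hσ hεsum.tendsto_atTop_zero
    hrs hM hx hAL hupdate
  obtain ⟨β, hβ, hK⟩ := helsc _ (isCompact_closedBall (A xinf) 1) (convex_closedBall _ _)
  obtain ⟨hint, hfin, hfeas, hopt, huniq⟩ := dual_solution_of_isMin hαh hconv hdiff hlip pconv
    pbot hmin hrs hβ (strongConvexOn_of_forall_add_mul_sq_le (convex_closedBall _ _) hK)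
  exact ⟨Metric.isBounded_range_of_tendsto x hx, ⟨xinf, hmin, hx⟩,
    Metric.isBounded_range_of_tendsto _ hyz, _, _, hint, hfin, hfeas, hopt, huniq, hyz⟩
end
end
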